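/- arXiv:2505.20153 — 6 statements merged into one kernel-verified Lean document; each statement's English description precedes it below -/
import Mathlib

section
/- For every positive integer n and all real numbers p, q, the following identity holds: ∑_{k=0}^{n} J(k) · C(n,k) · p^k q^{n−k} = ∑_{k=1}^{n} [ (p+q)^n − q^k (p+q)^{n−k} ] / k. -/
/-!
Both sides vanish for `n = 0` and satisfy the recursion
`S (n + 1) = (p + q) S n + ((p + q) ^ (n + 1) - q ^ (n + 1)) / (n + 1)`.
For the left side this follows from Pascal's rule: a binomial sum with weights `a k` grows by the
factor `p + q` plus the binomial sum of the increments `a (k + 1) - a k = 1 / (k + 1)`, and that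
sum is `∫₀^p (t + q) ^ n dt`, evaluated through `(n + 1) C(n, k) = (k + 1) C(n + 1, k + 1)`.
-/

open Finset

/-- `J m` is the `m`-th harmonic number `∑_{k=1}^m 1/k`, with `J 0 = 0`. -/
noncomputable def J (m : ℕ) : ℝ := ∑ k ∈ Finset.range m, (1 : ℝ) / (k + 1)

theorem sum_mul_choose_mul_pow_mul_pow_succ {R : Type*} [CommRing R] (a : ℕ → R) (n : ℕ)
    (p q : R) :
    ∑ k ∈ range (n + 2), a k * ((n + 1).choose k : R) * p ^ k * q ^ (n + 1 - k)
      = (p + q) * ∑ k ∈ range (n + 1), a k * (n.choose k : R) * p ^ k * q ^ (n - k)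
        + ∑ k ∈ range (n + 1), (a (k + 1) - a k) * (n.choose k : R) * p ^ (k + 1) * q ^ (n - k) := by
  have hq : ∑ k ∈ range (n + 1), a (k + 1) * (n.choose (k + 1) : R) * p ^ (k + 1) * q ^ (n - k)
      + a 0 * q ^ (n + 1) = q * ∑ k ∈ range (n + 1), a k * (n.choose k : R) * p ^ k * q ^ (n - k) := by
    rw [sum_range_succ, Nat.choose_succ_self, sum_range_succ', mul_add, mul_sum]
    simp only [Nat.cast_zero, mul_zero, zero_mul, add_zero, Nat.choose_zero_right, Nat.cast_one,
      pow_zero, mul_one, Nat.sub_zero]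
    congr 1
    · refine sum_congr rfl fun k hk => ?_
      rw [show n - k = n - (k + 1) + 1 by have := mem_range.mp hk; omega, pow_succ]
      ring
    · ring
  have hpascal : ∀ k ∈ range (n + 1),
      a (k + 1) * ((n + 1).choose (k + 1) : R) * p ^ (k + 1) * q ^ (n + 1 - (k + 1))
        = p * (a k * (n.choose k : R) * p ^ k * q ^ (n - k))
          + a (k + 1) * (n.choose (k + 1) : R) * p ^ (k + 1) * q ^ (n - k)
          + (a (k + 1) - a k) * (n.choose k : R) * p ^ (k + 1) * q ^ (n - k) := by
    intro k _
    rw [Nat.choose_succ_succ, Nat.succ_sub_succ]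
    push_cast
    ring
  rw [sum_range_succ', sum_congr rfl hpascal, sum_add_distrib, sum_add_distrib, ← mul_sum]
  simp only [Nat.choose_zero_right, Nat.cast_one, pow_zero, mul_one, Nat.sub_zero]
  linear_combination hq

theorem sum_choose_div_succ_mul_pow_mul_pow {K : Type*} [Field K] [CharZero K] (n : ℕ) (p q : K) :
    ∑ k ∈ range (n + 1), (n.choose k : K) / (k + 1) * p ^ (k + 1) * q ^ (n - k)
      = ((p + q) ^ (n + 1) - q ^ (n + 1)) / (n + 1) := by
  have hchoose (k : ℕ) : (n.choose k : K) / (k + 1) = ((n + 1).choose (k + 1) : K) / (n + 1) := by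
    rw [div_eq_div_iff (Nat.cast_add_one_ne_zero k) (Nat.cast_add_one_ne_zero n), mul_comm]
    exact_mod_cast Nat.add_one_mul_choose_eq n k
  have hbinom : ∑ k ∈ range (n + 1), ((n + 1).choose (k + 1) : K) * p ^ (k + 1) * q ^ (n - k)
      = (p + q) ^ (n + 1) - q ^ (n + 1) := by
    rw [add_pow, sum_range_succ' _ (n + 1)]
    simp only [pow_zero, one_mul, Nat.sub_zero, Nat.choose_zero_right, Nat.cast_one, mul_one,
      Nat.succ_sub_succ, add_sub_cancel_right]
    exact sum_congr rfl fun k _ => by ring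
  simp_rw [hchoose, ← hbinom, sum_div]
  exact sum_congr rfl fun k _ => by ring

theorem J_succ_sub (m : ℕ) : J (m + 1) - J m = 1 / (m + 1) := by
  simp [J, sum_range_succ]

theorem sum_J_mul_choose_mul_pow_mul_pow_succ (n : ℕ) (p q : ℝ) :
    ∑ k ∈ range (n + 2), J k * ((n + 1).choose k : ℝ) * p ^ k * q ^ (n + 1 - k)
      = (p + q) * ∑ k ∈ range (n + 1), J k * (n.choose k : ℝ) * p ^ k * q ^ (n - k)
        + ((p + q) ^ (n + 1) - q ^ (n + 1)) / (n + 1) := by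
  rw [sum_mul_choose_mul_pow_mul_pow_succ, ← sum_choose_div_succ_mul_pow_mul_pow]
  congr 1
  exact sum_congr rfl fun k _ => by rw [J_succ_sub]; ring

theorem sum_Icc_sub_pow_mul_pow_div_succ {K : Type*} [Field K] (n : ℕ) (s q : K) :
    ∑ k ∈ Icc 1 (n + 1), (s ^ (n + 1) - q ^ k * s ^ (n + 1 - k)) / k
      = s * ∑ k ∈ Icc 1 n, (s ^ n - q ^ k * s ^ (n - k)) / k
        + (s ^ (n + 1) - q ^ (n + 1)) / (n + 1) := by
  rw [sum_Icc_succ_top (Nat.le_add_left 1 n), mul_sum, Nat.sub_self, pow_zero, mul_one,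
    Nat.cast_add_one]
  congr 1
  refine sum_congr rfl fun k hk => ?_
  rw [show n + 1 - k = n - k + 1 by have := (mem_Icc.mp hk).2; omega]
  ring

theorem harmonic_binomial_identity_general (n : ℕ) (p q : ℝ) :
    ∑ k ∈ Finset.range (n + 1), J k * (n.choose k : ℝ) * p ^ k * q ^ (n - k)
      = ∑ k ∈ Finset.Icc 1 n, ((p + q) ^ n - q ^ k * (p + q) ^ (n - k)) / k := by
  induction n with
  | zero => simp [J]
  | succ n ih =>
    rw [sum_J_mul_choose_mul_pow_mul_pow_succ, sum_Icc_sub_pow_mul_pow_div_succ, ih]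

/-- For every positive integer `n` and all real `p, q`,
`∑_{k=0}^n J(k) C(n,k) p^k q^{n−k} = ∑_{k=1}^n [(p+q)^n − q^k (p+q)^{n−k}]/k`. -/
theorem harmonic_binomial_identity (n : ℕ) (hn : 1 ≤ n) (p q : ℝ) :
    ∑ k ∈ Finset.range (n + 1), J k * (n.choose k : ℝ) * p ^ k * q ^ (n - k)
      = ∑ k ∈ Finset.Icc 1 n, ((p + q) ^ n - q ^ k * (p + q) ^ (n - k)) / k :=
  harmonic_binomial_identity_general n p q
end

section
/- For every positive integer n and all real numbers p, q, the following identity holds: ∑_{k=1}^{n} (1/k) · C(n,k) · p^k q^{n−k} = ∑_{k=1}^{n} [ (p+q)^k q^{n−k} − q^n ] / k. -/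
/-!
Both sides `a n` satisfy `a 0 = 0` and `a (n + 1) = q * a n + ((p + q) ^ (n + 1) - q ^ (n + 1)) / (n + 1)`.
For the right side this is immediate; for the left side split `C(n+1,k) = C(n,k) + C(n,k-1)` and use
`C(n,k-1) / k = C(n+1,k) / (n+1)`, after which the binomial theorem sums the second part.
-/

open Finset

theorem sum_Icc_one_choose_mul_pow {R : Type*} [CommRing R] (n : ℕ) (p q : R) :
    ∑ k ∈ Icc 1 n, (n.choose k : R) * p ^ k * q ^ (n - k) = (p + q) ^ n - q ^ n := by
  rw [add_pow, range_eq_Ico, sum_eq_sum_Ico_succ_bot (by omega : 0 < n + 1), zero_add,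
    Ico_add_one_right_eq_Icc]
  simp only [pow_zero, Nat.choose_zero_right, Nat.cast_one, Nat.sub_zero, one_mul, mul_one,
    add_sub_cancel_left]
  exact sum_congr rfl fun k _ => by ring

variable {K : Type*} [Field K] [CharZero K]

theorem inv_mul_choose_succ (n : ℕ) {k : ℕ} (hk : 1 ≤ k) :
    1 / (k : K) * (n + 1).choose k = 1 / k * n.choose k + (n + 1).choose k / (n + 1) := by
  obtain ⟨j, rfl⟩ := Nat.exists_eq_add_of_le' hk
  have h : ((n : K) + 1) * n.choose j = (n + 1).choose (j + 1) * (j + 1) := by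
    exact_mod_cast n.add_one_mul_choose_eq j
  have hpascal : ((n + 1).choose (j + 1) : K) = n.choose j + n.choose (j + 1) := by
    exact_mod_cast n.choose_succ_succ' j
  field_simp
  push_cast
  linear_combination h + ((n : K) + 1) * hpascal

theorem sum_inv_mul_choose_mul_pow_succ (n : ℕ) (p q : K) :
    ∑ k ∈ Icc 1 (n + 1), 1 / (k : K) * (n + 1).choose k * p ^ k * q ^ (n + 1 - k)
      = q * ∑ k ∈ Icc 1 n, 1 / (k : K) * n.choose k * p ^ k * q ^ (n - k)
        + ((p + q) ^ (n + 1) - q ^ (n + 1)) / (n + 1) := by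
  have hsplit : ∀ k ∈ Icc 1 (n + 1),
      1 / (k : K) * (n + 1).choose k * p ^ k * q ^ (n + 1 - k)
        = 1 / (k : K) * n.choose k * p ^ k * q ^ (n + 1 - k)
          + (n + 1).choose k * p ^ k * q ^ (n + 1 - k) / (n + 1) := by
    intro k hk
    rw [inv_mul_choose_succ n (mem_Icc.mp hk).1]
    ring
  have hshift : ∀ k ∈ Icc 1 n, 1 / (k : K) * n.choose k * p ^ k * q ^ (n + 1 - k)
      = q * (1 / (k : K) * n.choose k * p ^ k * q ^ (n - k)) := by
    intro k hk
    rw [Nat.sub_add_comm (mem_Icc.mp hk).2, pow_succ]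
    ring
  rw [sum_congr rfl hsplit, sum_add_distrib, ← sum_div, sum_Icc_one_choose_mul_pow,
    sum_Icc_succ_top (by omega), Nat.choose_succ_self, sum_congr rfl hshift, mul_sum]
  simp

theorem sum_add_pow_mul_pow_sub_pow_div_succ (n : ℕ) (p q : K) :
    ∑ k ∈ Icc 1 (n + 1), ((p + q) ^ k * q ^ (n + 1 - k) - q ^ (n + 1)) / k
      = q * ∑ k ∈ Icc 1 n, ((p + q) ^ k * q ^ (n - k) - q ^ n) / k
        + ((p + q) ^ (n + 1) - q ^ (n + 1)) / (n + 1) := by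
  have hshift : ∀ k ∈ Icc 1 n, ((p + q) ^ k * q ^ (n + 1 - k) - q ^ (n + 1)) / (k : K)
      = q * (((p + q) ^ k * q ^ (n - k) - q ^ n) / k) := by
    intro k hk
    rw [Nat.sub_add_comm (mem_Icc.mp hk).2, pow_succ, pow_succ]
    ring
  rw [sum_Icc_succ_top (by omega), sum_congr rfl hshift, mul_sum]
  simp

theorem reciprocal_binomial_identity_general (n : ℕ) (p q : ℝ) :
    ∑ k ∈ Finset.Icc 1 n, (1 / (k : ℝ)) * (n.choose k : ℝ) * p ^ k * q ^ (n - k)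
      = ∑ k ∈ Finset.Icc 1 n, ((p + q) ^ k * q ^ (n - k) - q ^ n) / k := by
  induction n with
  | zero => simp
  | succ n ih =>
    rw [sum_inv_mul_choose_mul_pow_succ, sum_add_pow_mul_pow_sub_pow_div_succ, ih]

/-- For every positive integer `n` and all real `p, q`,
`∑_{k=1}^n (1/k) C(n,k) p^k q^{n−k} = ∑_{k=1}^n [(p+q)^k q^{n−k} − q^n]/k`. -/
theorem reciprocal_binomial_identity (n : ℕ) (hn : 1 ≤ n) (p q : ℝ) :
    ∑ k ∈ Finset.Icc 1 n, (1 / (k : ℝ)) * (n.choose k : ℝ) * p ^ k * q ^ (n - k)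
      = ∑ k ∈ Finset.Icc 1 n, ((p + q) ^ k * q ^ (n - k) - q ^ n) / k :=
  reciprocal_binomial_identity_general n p q
end

section
/- Let n be a positive integer, p ∈ (0,1], and let M be a Binomial(n, p) random variable. Then E[(J(n) − J(M))²] = ∑_{m=2}^{n} ∑_{k=1}^{m−1} (1−p)^m / (k(m−k)) + ∑_{m=1}^{n} ∑_{k=n−m+1}^{n} (1−p)^m / (mk), and this quantity also equals (log p)² − ∑_{m=n+1}^{∞} ∑_{k=1}^{m−1} (1−p)^m / (k(m−k)) + ∑_{m=1}^{n} ∑_{k=n−m+1}^{n} (1−p)^m / (mk). -/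
open Finset fwdDiff

section BinomialNewton

variable {R : Type*} [CommRing R]

theorem sum_choose_mul_choose_mul_pow_mul_one_sub_pow (n k : ℕ) (q : R) :
    ∑ j ∈ range (n + 1), (n.choose j * j.choose k : R) * q ^ j * (1 - q) ^ (n - j)
      = n.choose k * q ^ k := by
  rcases lt_or_ge n k with hnk | hkn
  · rw [Nat.choose_eq_zero_of_lt hnk, Nat.cast_zero, zero_mul]
    refine sum_eq_zero fun j hj => ?_
    rw [Nat.choose_eq_zero_of_lt (n := j) (by grind)]
    simp
  have hlow : ∑ j ∈ range k, (n.choose j * j.choose k : R) * q ^ j * (1 - q) ^ (n - j) = 0 :=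
    sum_eq_zero fun j hj => by
      rw [Nat.choose_eq_zero_of_lt (mem_range.mp hj)]
      simp
  rw [← sum_range_add_sum_Ico _ (by omega : k ≤ n + 1), hlow, zero_add,
    sum_Ico_eq_sum_range, show n + 1 - k = n - k + 1 by omega]
  calc ∑ l ∈ range (n - k + 1),
        (n.choose (k + l) * (k + l).choose k : R) * q ^ (k + l) * (1 - q) ^ (n - (k + l))
      = n.choose k * q ^ k * ∑ l ∈ range (n - k + 1),
          q ^ l * (1 - q) ^ (n - k - l) * (n - k).choose l := by
        rw [mul_sum]
        refine sum_congr rfl fun l _ => ?_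
        rw [← Nat.cast_mul, Nat.choose_mul (Nat.le_add_right k l), Nat.add_sub_cancel_left,
          Nat.sub_add_eq, pow_add]
        push_cast
        ring
    _ = n.choose k * q ^ k := by rw [← add_pow, add_sub_cancel, one_pow, mul_one]

theorem sum_binomial_mul_eq_sum_fwdDiff_iter (n : ℕ) (q : R) (f : ℕ → R) :
    ∑ j ∈ range (n + 1), (n.choose j : R) * q ^ j * (1 - q) ^ (n - j) * f j
      = ∑ k ∈ range (n + 1), (n.choose k : R) * q ^ k * Δ_[1] ^[k] f 0 := by
  have newton : ∀ j ∈ range (n + 1),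
      f j = ∑ k ∈ range (n + 1), (j.choose k : R) * Δ_[1] ^[k] f 0 := by
    intro j hj
    have h := shift_eq_sum_fwdDiff_iter 1 f j 0
    rw [zero_add, smul_eq_mul, mul_one] at h
    rw [h, sum_subset (range_subset_range.mpr (mem_range.mp hj : j + 1 ≤ n + 1))]
    · simp only [nsmul_eq_mul]
    · intro k _ hk
      rw [Nat.choose_eq_zero_of_lt (by simpa using hk), zero_smul]
  calc ∑ j ∈ range (n + 1), (n.choose j : R) * q ^ j * (1 - q) ^ (n - j) * f j
      = ∑ k ∈ range (n + 1), (∑ j ∈ range (n + 1),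
          (n.choose j * j.choose k : R) * q ^ j * (1 - q) ^ (n - j)) * Δ_[1] ^[k] f 0 := by
        rw [sum_congr rfl fun j hj => by rw [newton j hj, mul_sum], sum_comm]
        refine sum_congr rfl fun k _ => ?_
        rw [sum_mul]
        refine sum_congr rfl fun j _ => ?_
        ring
    _ = ∑ k ∈ range (n + 1), (n.choose k : R) * q ^ k * Δ_[1] ^[k] f 0 := by
        simp_rw [sum_choose_mul_choose_mul_pow_mul_one_sub_pow]

end BinomialNewton

section FwdDiff

variable {M G : Type*} [AddCommMonoid M] [AddCommGroup G] (h : M)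

lemma fwdDiff_iter_succ_apply (f : M → G) (r : ℕ) (y : M) :
    Δ_[h] ^[r + 1] f y = Δ_[h] ^[r] (fun x => f (x + h)) y - Δ_[h] ^[r] f y := by
  rw [Function.iterate_succ_apply', fwdDiff, fwdDiff_iter_comp_add]

lemma fwdDiff_iter_add_const (f : M → G) (c : G) {r : ℕ} (hr : r ≠ 0) :
    Δ_[h] ^[r] (fun x => f x + c) = Δ_[h] ^[r] f := by
  obtain ⟨s, rfl⟩ := Nat.exists_eq_succ_of_ne_zero hr
  rw [Function.iterate_succ_apply, Function.iterate_succ_apply]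
  congr 1
  funext x
  exact add_sub_add_right_eq_sub _ _ _

end FwdDiff

@[simp] lemma J_zero : J 0 = 0 := sum_range_zero _

lemma J_succ (m : ℕ) : J (m + 1) = J m + 1 / (m + 1) := by
  rw [J, J, sum_range_succ]

lemma J_eq_J_sub_one_add {r : ℕ} (hr : 1 ≤ r) : J r = J (r - 1) + 1 / r := by
  conv_lhs => rw [← Nat.sub_add_cancel hr]
  rw [J_succ, Nat.cast_sub hr, Nat.cast_one, sub_add_cancel]

lemma J_eq_sum_Icc (m : ℕ) : J m = ∑ k ∈ Icc 1 m, (1 : ℝ) / k := by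
  induction m with
  | zero => simp
  | succ m ih => rw [J_succ, ih, sum_Icc_succ_top (by omega), Nat.cast_succ]

lemma sum_Icc_one_div_eq_J_sub (n m : ℕ) :
    ∑ k ∈ Icc (n - m + 1) n, (1 : ℝ) / k = J n - J (n - m) := by
  rw [J_eq_sum_Icc, J_eq_sum_Icc, eq_sub_iff_add_eq', ← Ico_add_one_right_eq_Icc,
    ← Ico_add_one_right_eq_Icc, ← Ico_add_one_right_eq_Icc,
    sum_Ico_consecutive _ (by omega) (by omega)]

lemma sum_Icc_one_div_mul_sub (m : ℕ) :
    ∑ k ∈ Icc 1 (m - 1), (1 : ℝ) / (k * ((m : ℝ) - k)) = 2 * J (m - 1) / m := by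
  rcases m with _ | m
  · simp
  have partial_fractions : ∀ k ∈ Icc 1 m, (1 : ℝ) / (k * ((m + 1 : ℕ) - k))
      = (1 / k + 1 / ((m + 1 - k : ℕ) : ℝ)) / (m + 1) := by
    intro k hk
    obtain ⟨hk1, hkm⟩ := mem_Icc.mp hk
    have hk0 : (k : ℝ) ≠ 0 := by positivity
    have hmk : ((m + 1 : ℕ) : ℝ) - k ≠ 0 := by
      rw [← Nat.cast_sub (by omega)]
      exact Nat.cast_ne_zero.mpr (by omega)
    rw [Nat.cast_sub (by omega)]
    field_simp
    push_cast
    ring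
  have reflect :
      ∑ k ∈ Icc 1 m, (1 : ℝ) / ((m + 1 - k : ℕ) : ℝ) = ∑ k ∈ Icc 1 m, (1 : ℝ) / k := by
    rw [← Ico_add_one_right_eq_Icc,
      sum_Ico_reflect (fun k => (1 : ℝ) / k) 1 (show m + 1 ≤ m + 1 + 1 by omega),
      Nat.add_sub_cancel_left, Nat.add_sub_cancel]
  rw [Nat.add_sub_cancel, sum_congr rfl partial_fractions, ← sum_div, sum_add_distrib, reflect,
    ← J_eq_sum_Icc, Nat.cast_succ]
  ring

lemma sum_Icc_pow_div_add_sum_Icc_pow_div (x : ℝ) (n m : ℕ) :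
    ∑ k ∈ Icc 1 (m - 1), x ^ m / (k * ((m : ℝ) - k)) + ∑ k ∈ Icc (n - m + 1) n, x ^ m / (m * k)
      = x ^ m * (2 * J (m - 1) + (J n - J (n - m))) / m := by
  have convolution : ∑ k ∈ Icc 1 (m - 1), x ^ m / (k * ((m : ℝ) - k))
      = x ^ m * (2 * J (m - 1) / m) := by
    rw [← sum_Icc_one_div_mul_sub, mul_sum]
    exact sum_congr rfl fun k _ => by ring
  have harmonic : ∑ k ∈ Icc (n - m + 1) n, x ^ m / (m * k) = x ^ m / m * (J n - J (n - m)) := by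
    rw [← sum_Icc_one_div_eq_J_sub, mul_sum]
    exact sum_congr rfl fun k _ => by ring
  rw [convolution, harmonic]
  ring

noncomputable def harmonicTail (N j : ℕ) : ℝ := J N - J (N - j)

lemma harmonicTail_succ_succ (N j : ℕ) :
    harmonicTail (N + 1) (j + 1) = harmonicTail N j + 1 / (N + 1) := by
  rw [harmonicTail, harmonicTail, J_succ, Nat.add_sub_add_right]
  ring

lemma harmonicTail_succ_left {r N : ℕ} (hrN : r ≤ N) :
    harmonicTail (N + 1) r = harmonicTail N r + 1 / (N + 1) - 1 / (N + 1 - r) := by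
  rw [harmonicTail, harmonicTail, J_succ, Nat.sub_add_comm hrN, J_succ, Nat.cast_sub hrN]
  ring

lemma fwdDiff_iter_harmonicTail_succ {r : ℕ} (hr : r ≠ 0) (N : ℕ) :
    Δ_[1] ^[r + 1] (harmonicTail (N + 1)) 0
      = Δ_[1] ^[r] (harmonicTail N) 0 - Δ_[1] ^[r] (harmonicTail (N + 1)) 0 := by
  rw [fwdDiff_iter_succ_apply]
  simp only [harmonicTail_succ_succ]
  rw [fwdDiff_iter_add_const _ _ _ hr]

lemma fwdDiff_iter_harmonicTail_sq_succ {r : ℕ} (hr : r ≠ 0) (N : ℕ) :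
    Δ_[1] ^[r + 1] (harmonicTail (N + 1) ^ 2) 0
      = Δ_[1] ^[r] (harmonicTail N ^ 2) 0 + 2 / (N + 1) * Δ_[1] ^[r] (harmonicTail N) 0
        - Δ_[1] ^[r] (harmonicTail (N + 1) ^ 2) 0 := by
  have expand : (fun j => (harmonicTail (N + 1) ^ 2) (j + 1)) = fun j =>
      (harmonicTail N ^ 2 + (2 / (N + 1) : ℝ) • harmonicTail N) j + 1 / (N + 1) ^ 2 := by
    funext j
    simp only [Pi.pow_apply, Pi.add_apply, Pi.smul_apply, smul_eq_mul, harmonicTail_succ_succ]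
    field_simp
    ring
  rw [fwdDiff_iter_succ_apply, expand, fwdDiff_iter_add_const _ _ _ hr, fwdDiff_iter_add,
    fwdDiff_iter_const_smul, Pi.add_apply, Pi.smul_apply, smul_eq_mul]

lemma cast_add_one_mul_choose_add_one (N r : ℕ) :
    ((r + 1) * (N + 1).choose (r + 1) : ℝ) = (N + 1) * N.choose r := by
  rw [mul_comm]
  exact_mod_cast (Nat.add_one_mul_choose_eq N r).symm

lemma cast_choose_add_one_mul {N r : ℕ} (hr : r ≤ N + 1) :
    ((N + 1).choose r * (N + 1 - r) : ℝ) = N.choose r * (N + 1) := by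
  rw [← Nat.cast_add_one, ← Nat.cast_sub hr]
  exact_mod_cast (Nat.choose_mul_succ_eq N r).symm

theorem fwdDiff_iter_harmonicTail {r N : ℕ} (hr : 1 ≤ r) (hrN : r ≤ N) :
    Δ_[1] ^[r] (harmonicTail N) 0 = 1 / (r * N.choose r) := by
  induction r, hr using Nat.le_induction generalizing N with
  | base =>
    obtain ⟨N, rfl⟩ := Nat.exists_eq_add_of_le' hrN
    simp [fwdDiff, harmonicTail, J_succ]
  | succ r hr ih =>
    obtain ⟨N, rfl⟩ := Nat.exists_eq_add_of_le' (le_of_add_le_right hrN)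
    have hc : (0 : ℝ) < N.choose r := by exact_mod_cast Nat.choose_pos (by omega)
    have hc' : (0 : ℝ) < (N + 1).choose r := by exact_mod_cast Nat.choose_pos (by omega)
    have hr0 : (0 : ℝ) < r := by exact_mod_cast hr
    rw [fwdDiff_iter_harmonicTail_succ (by omega), ih (by omega), ih (by omega), Nat.cast_succ,
      cast_add_one_mul_choose_add_one]
    field_simp
    linear_combination cast_choose_add_one_mul (N := N) (r := r) (by omega)

theorem fwdDiff_iter_harmonicTail_sq {r N : ℕ} (hr : 1 ≤ r) (hrN : r ≤ N) :
    Δ_[1] ^[r] (harmonicTail N ^ 2) 0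
      = (2 * J (r - 1) + harmonicTail N r) / (r * N.choose r) := by
  induction r, hr using Nat.le_induction generalizing N with
  | base =>
    obtain ⟨N, rfl⟩ := Nat.exists_eq_add_of_le' hrN
    simp [fwdDiff, harmonicTail, J_succ]
    field_simp
  | succ r hr ih =>
    obtain ⟨N, rfl⟩ := Nat.exists_eq_add_of_le' (le_of_add_le_right hrN)
    have hc : (0 : ℝ) < N.choose r := by exact_mod_cast Nat.choose_pos (by omega)
    have hr0 : (0 : ℝ) < r := by exact_mod_cast hr
    have hNr : (0 : ℝ) < N + 1 - r := by
      have : (r : ℝ) ≤ N := by exact_mod_cast (by omega : r ≤ N)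
      linarith
    have hc' : ((N + 1).choose r : ℝ) = N.choose r * (N + 1) / (N + 1 - r) := by
      rw [eq_div_iff hNr.ne', cast_choose_add_one_mul (by omega)]
    rw [fwdDiff_iter_harmonicTail_sq_succ (by omega), ih (by omega), ih (by omega),
      fwdDiff_iter_harmonicTail hr (by omega), Nat.cast_succ, cast_add_one_mul_choose_add_one,
      harmonicTail_succ_succ, harmonicTail_succ_left (by omega), Nat.add_sub_cancel,
      J_eq_J_sub_one_add hr, hc']
    field_simp
    ring

theorem sum_binomial_mul_J_sub_sq (n : ℕ) (p : ℝ) :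
    ∑ m ∈ range (n + 1), (J n - J m) ^ 2 * n.choose m * p ^ m * (1 - p) ^ (n - m)
      = ∑ m ∈ range (n + 1), (∑ k ∈ Icc 1 (m - 1), (1 - p) ^ m / (k * ((m : ℝ) - k))
          + ∑ k ∈ Icc (n - m + 1) n, (1 - p) ^ m / (m * k)) := by
  calc ∑ m ∈ range (n + 1), (J n - J m) ^ 2 * n.choose m * p ^ m * (1 - p) ^ (n - m)
      = ∑ j ∈ range (n + 1), (n.choose j : ℝ) * (1 - p) ^ j * (1 - (1 - p)) ^ (n - j)
          * (harmonicTail n ^ 2) j := by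
        rw [← sum_range_reflect]
        refine sum_congr rfl fun j hj => ?_
        have hjn : j ≤ n := Nat.lt_succ_iff.mp (mem_range.mp hj)
        rw [Nat.add_sub_cancel, Nat.choose_symm_of_eq_add (Nat.sub_add_cancel hjn).symm,
          Nat.sub_sub_self hjn, sub_sub_cancel, Pi.pow_apply, harmonicTail]
        ring
    _ = ∑ r ∈ range (n + 1), (n.choose r : ℝ) * (1 - p) ^ r * Δ_[1] ^[r] (harmonicTail n ^ 2) 0 :=
        sum_binomial_mul_eq_sum_fwdDiff_iter n (1 - p) _
    _ = ∑ m ∈ range (n + 1), (∑ k ∈ Icc 1 (m - 1), (1 - p) ^ m / (k * ((m : ℝ) - k))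
          + ∑ k ∈ Icc (n - m + 1) n, (1 - p) ^ m / (m * k)) := by
        refine sum_congr rfl fun r hr => ?_
        rw [sum_Icc_pow_div_add_sum_Icc_pow_div]
        rcases Nat.eq_zero_or_pos r with rfl | hr0
        · simp [harmonicTail]
        have hrn : r ≤ n := Nat.lt_succ_iff.mp (mem_range.mp hr)
        have hc : (n.choose r : ℝ) ≠ 0 := Nat.cast_ne_zero.mpr (Nat.choose_pos hrn).ne'
        rw [fwdDiff_iter_harmonicTail_sq hr0 hrn, harmonicTail]
        field_simp

theorem hasSum_log_one_sub_sq {x : ℝ} (hx : |x| < 1) :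
    HasSum (fun m : ℕ => ∑ k ∈ Icc 1 (m - 1), x ^ m / (k * ((m : ℝ) - k)))
      (Real.log (1 - x) ^ 2) := by
  have cauchy_coeff : ∀ n : ℕ,
      ∑ k ∈ range (n + 1), x ^ (k + 1) / (k + 1) * (x ^ (n - k + 1) / ((n - k : ℕ) + 1))
        = ∑ k ∈ Icc 1 (n + 2 - 1), x ^ (n + 2) / (k * (((n + 2 : ℕ) : ℝ) - k)) := by
    intro n
    rw [show n + 2 - 1 = n + 1 from rfl, ← Ico_add_one_right_eq_Icc, sum_Ico_eq_sum_range,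
      Nat.add_sub_cancel]
    refine sum_congr rfl fun k hk => ?_
    have hkn : k ≤ n := Nat.lt_succ_iff.mp (mem_range.mp hk)
    rw [div_mul_div_comm, ← pow_add, show k + 1 + (n - k + 1) = n + 2 by omega, Nat.cast_sub hkn]
    push_cast
    ring_nf
  have hf : HasSum (fun k : ℕ => x ^ (k + 1) / (k + 1)) (-Real.log (1 - x)) :=
    Real.hasSum_pow_div_log_of_abs_lt_one hx
  have hf_norm : Summable fun k : ℕ => ‖x ^ (k + 1) / (k + 1)‖ := by
    refine (Real.hasSum_pow_div_log_of_abs_lt_one (x := |x|) (by rwa [abs_abs])).summable.congr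
      fun k => ?_
    rw [Real.norm_eq_abs, abs_div, abs_pow, abs_of_pos (by positivity : (0 : ℝ) < k + 1)]
  have cauchy := hasSum_sum_range_mul_of_summable_norm hf_norm hf_norm
  rw [hf.tsum_eq, neg_mul_neg, ← sq] at cauchy
  rw [← hasSum_nat_add_iff' 2, sum_range_succ, sum_range_one]
  simp only [cauchy_coeff] at cauchy
  simpa using cauchy

theorem tsum_log_one_sub_sq_coeff_nat_add {x : ℝ} (hx : |x| < 1) (n : ℕ) :
    ∑' j : ℕ, ∑ k ∈ Icc 1 (n + j), x ^ (n + 1 + j) / (k * ((n + 1 + j : ℝ) - k))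
      = Real.log (1 - x) ^ 2
        - ∑ m ∈ range (n + 1), ∑ k ∈ Icc 1 (m - 1), x ^ m / (k * ((m : ℝ) - k)) := by
  rw [← ((hasSum_nat_add_iff' (n + 1)).mpr (hasSum_log_one_sub_sq hx)).tsum_eq]
  refine tsum_congr fun j => ?_
  rw [show j + (n + 1) - 1 = n + j by omega, show j + (n + 1) = n + 1 + j by omega]
  push_cast
  rfl

lemma sum_Icc_eq_sum_range {M : Type*} [AddCommMonoid M] {f : ℕ → M} {a : ℕ}
    (hf : ∀ m < a, f m = 0) (n : ℕ) : ∑ m ∈ Icc a n, f m = ∑ m ∈ range (n + 1), f m :=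
  sum_subset (fun m hm => by grind) fun m _ hm => hf m (by grind)

theorem harmonic_binomial_second_moment_general (n : ℕ) (p : ℝ)
    (hp0 : 0 < p) (hp1 : p ≤ 1) :
    (∑ m ∈ Finset.range (n + 1),
        (J n - J m) ^ 2 * (n.choose m : ℝ) * p ^ m * (1 - p) ^ (n - m)
      = ∑ m ∈ Finset.Icc 2 n, ∑ k ∈ Finset.Icc 1 (m - 1),
            (1 - p) ^ m / (k * ((m : ℝ) - k))
        + ∑ m ∈ Finset.Icc 1 n, ∑ k ∈ Finset.Icc (n - m + 1) n,
            (1 - p) ^ m / (m * k)) ∧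
    (∑ m ∈ Finset.Icc 2 n, ∑ k ∈ Finset.Icc 1 (m - 1),
            (1 - p) ^ m / (k * ((m : ℝ) - k))
        + ∑ m ∈ Finset.Icc 1 n, ∑ k ∈ Finset.Icc (n - m + 1) n,
            (1 - p) ^ m / (m * k)
      = (Real.log p) ^ 2
        - ∑' j : ℕ, ∑ k ∈ Finset.Icc 1 (n + j),
            (1 - p) ^ (n + 1 + j) / (k * ((n + 1 + j : ℝ) - k))
        + ∑ m ∈ Finset.Icc 1 n, ∑ k ∈ Finset.Icc (n - m + 1) n,
            (1 - p) ^ m / (m * k)) := by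
  have low := sum_Icc_eq_sum_range (a := 2)
    (f := fun m => ∑ k ∈ Icc 1 (m - 1), (1 - p) ^ m / (k * ((m : ℝ) - k)))
    (fun m hm => by rw [Icc_eq_empty (by omega), sum_empty]) n
  have high := sum_Icc_eq_sum_range (a := 1)
    (f := fun m => ∑ k ∈ Icc (n - m + 1) n, (1 - p) ^ m / (m * k))
    (fun m hm => by rw [Icc_eq_empty (by omega), sum_empty]) n
  have hq : |1 - p| < 1 := abs_sub_lt_iff.mpr ⟨by linarith, by linarith⟩
  refine ⟨?_, ?_⟩
  · rw [sum_binomial_mul_J_sub_sq, low, high, sum_add_distrib]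
  · rw [tsum_log_one_sub_sq_coeff_nat_add hq, sub_sub_cancel, low]
    ring

/-- Second moment of the harmonic-transformed binomial count:
for `M ~ Binomial(n,p)` with `n ≥ 1`, `p ∈ (0,1]`,
`E[(J(n)−J(M))²] = ∑_{m=2}^n ∑_{k=1}^{m−1} (1−p)^m/(k(m−k)) + ∑_{m=1}^n ∑_{k=n−m+1}^n (1−p)^m/(mk)`,
which also equals
`(log p)² − ∑_{m=n+1}^∞ ∑_{k=1}^{m−1} (1−p)^m/(k(m−k)) + ∑_{m=1}^n ∑_{k=n−m+1}^n (1−p)^m/(mk)`. -/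
theorem harmonic_binomial_second_moment (n : ℕ) (hn : 1 ≤ n) (p : ℝ)
    (hp0 : 0 < p) (hp1 : p ≤ 1) :
    (∑ m ∈ Finset.range (n + 1),
        (J n - J m) ^ 2 * (n.choose m : ℝ) * p ^ m * (1 - p) ^ (n - m)
      = ∑ m ∈ Finset.Icc 2 n, ∑ k ∈ Finset.Icc 1 (m - 1),
            (1 - p) ^ m / (k * ((m : ℝ) - k))
        + ∑ m ∈ Finset.Icc 1 n, ∑ k ∈ Finset.Icc (n - m + 1) n,
            (1 - p) ^ m / (m * k)) ∧
    (∑ m ∈ Finset.Icc 2 n, ∑ k ∈ Finset.Icc 1 (m - 1),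
            (1 - p) ^ m / (k * ((m : ℝ) - k))
        + ∑ m ∈ Finset.Icc 1 n, ∑ k ∈ Finset.Icc (n - m + 1) n,
            (1 - p) ^ m / (m * k)
      = (Real.log p) ^ 2
        - ∑' j : ℕ, ∑ k ∈ Finset.Icc 1 (n + j),
            (1 - p) ^ (n + 1 + j) / (k * ((n + 1 + j : ℝ) - k))
        + ∑ m ∈ Finset.Icc 1 n, ∑ k ∈ Finset.Icc (n - m + 1) n,
            (1 - p) ^ m / (m * k)) :=
  harmonic_binomial_second_moment_general n p hp0 hp1
end

section
/- Let p, q ∈ (0,1) with p + q < 1. Then ∑_{m=1}^{∞} ∑_{k=m+1}^{∞} [ (1−p)^m (1 − q/(1−p))^k + (1−q)^m (1 − p/(1−q))^k ] / (mk) = log(p)·log(q) − log(q)·log(1−q) − log(p)·log(1−p) + ∑_{m=1}^{∞} [ 1 − (1−p)^m − (1−q)^m ] / m². (The last series equals ζ(2) − Li₂(1−p) − Li₂(1−q), where Li₂(z) = ∑_{m≥1} z^m/m² is the dilogarithm and ζ(2) = ∑_{m≥1} 1/m².) -/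
/-!
Write `a = 1 - p`, `b = 1 - q / (1 - p)`, so that `a b = 1 - p - q`, and symmetrically
`a' = 1 - q`, `b' = 1 - p / (1 - q)`. The inner sums are tails of the series of `-log (1 - b)`,
so each half of the left side is the part `k > m` of
`log (1 - a) log (1 - b) = ∑_{m, k ≥ 1} aᵐ bᵏ / (m k)`, i.e. the product minus the part
`lowerLogSum a b` with `k ≤ m`. Both partial derivatives of `lowerLogSum` are elementary
(logarithms), so for fixed `q` the function
`p ↦ lowerLogSum a b + lowerLogSum a' b' - log p log q - Li₂ (1 - p)` has zero derivative.
At `p = 1 - q` both lower sums vanish, and Euler's reflection formula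
`Li₂ x + Li₂ (1 - x) + log x log (1 - x) = ζ(2)` identifies the constant.
-/

open Real Filter Set Topology

lemma hasDerivAt_pow_succ_div_succ (n : ℕ) (x : ℝ) :
    HasDerivAt (fun y : ℝ => y ^ (n + 1) / ((n : ℝ) + 1)) (x ^ n) x := by
  refine ((hasDerivAt_pow (n + 1) x).div_const ((n : ℝ) + 1)).congr_deriv ?_
  push_cast
  field_simp

lemma summable_succ_mul_pow {r : ℝ} (hr0 : 0 ≤ r) (hr1 : r < 1) :
    Summable (fun n : ℕ => ((n : ℝ) + 1) * r ^ n) := by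
  have hr : ‖r‖ < 1 := by rwa [Real.norm_of_nonneg hr0]
  simpa [add_mul] using
    (summable_pow_mul_geometric_of_norm_lt_one 1 hr).add (summable_geometric_of_norm_lt_one hr)

lemma abs_mul_lt_one {a b : ℝ} (ha : |a| < 1) (hb : |b| ≤ 1) : |a * b| < 1 := by
  rw [abs_mul]
  exact (mul_le_of_le_one_right (abs_nonneg a) hb).trans_lt ha

lemma abs_one_sub_div_lt_one {x y : ℝ} (hx : 0 < x) (hxy : x < 2 * y) : |1 - x / y| < 1 := by
  have hy : 0 < y := by linarith
  have : x / y < 2 := by rw [div_lt_iff₀ hy]; linarith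
  exact abs_lt.2 ⟨by linarith, by linarith [div_pos hx hy]⟩

noncomputable def dilog (x : ℝ) : ℝ := ∑' n : ℕ, x ^ (n + 1) / ((n : ℝ) + 1) ^ 2

lemma summable_one_div_succ_sq : Summable (fun n : ℕ => 1 / ((n : ℝ) + 1) ^ 2) := by
  simpa using (summable_nat_add_iff 1).2 (summable_one_div_nat_pow.2 one_lt_two)

lemma norm_pow_succ_div_succ_sq_le {x : ℝ} (hx : |x| ≤ 1) (n : ℕ) :
    ‖x ^ (n + 1) / ((n : ℝ) + 1) ^ 2‖ ≤ 1 / ((n : ℝ) + 1) ^ 2 := by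
  rw [norm_div, norm_pow, norm_pow, Real.norm_eq_abs, Real.norm_of_nonneg (by positivity)]
  gcongr
  exact pow_le_one₀ (abs_nonneg x) hx

lemma hasSum_dilog {x : ℝ} (hx : |x| ≤ 1) :
    HasSum (fun n : ℕ => x ^ (n + 1) / ((n : ℝ) + 1) ^ 2) (dilog x) :=
  (Summable.of_norm_bounded summable_one_div_succ_sq (norm_pow_succ_div_succ_sq_le hx)).hasSum

lemma continuousOn_dilog : ContinuousOn dilog (Icc (-1) 1) :=
  continuousOn_tsum (fun _ => (continuous_pow _ |>.div_const _).continuousOn)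
    summable_one_div_succ_sq fun n _ hx => norm_pow_succ_div_succ_sq_le (abs_le.2 hx) n

lemma hasDerivAt_dilog {x : ℝ} (hx0 : x ≠ 0) (hx : |x| < 1) :
    HasDerivAt dilog (-log (1 - x) / x) x := by
  obtain ⟨r, hxr, hr1⟩ := exists_between hx
  have hr0 : 0 < r := (abs_nonneg x).trans_lt hxr
  have hterm (n : ℕ) (y : ℝ) : HasDerivAt (fun y : ℝ => y ^ (n + 1) / ((n : ℝ) + 1) ^ 2)
      (y ^ n / ((n : ℝ) + 1)) y := by
    simpa [sq, div_div] using (hasDerivAt_pow_succ_div_succ n y).div_const ((n : ℝ) + 1)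
  have hbound (n : ℕ) (y : ℝ) (hy : y ∈ Ioo (-r) r) : ‖y ^ n / ((n : ℝ) + 1)‖ ≤ r ^ n := by
    rw [norm_div, norm_pow, Real.norm_eq_abs, Real.norm_of_nonneg (by positivity)]
    calc |y| ^ n / ((n : ℝ) + 1) ≤ |y| ^ n := div_le_self (by positivity) (by simp)
      _ ≤ r ^ n := pow_le_pow_left₀ (abs_nonneg y) (abs_le.2 ⟨hy.1.le, hy.2.le⟩) n
  have hderiv := hasDerivAt_tsum_of_isPreconnected
    (summable_geometric_of_lt_one hr0.le hr1) isOpen_Ioo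
    (convex_Ioo (-r) r).isPreconnected (fun n y _ => hterm n y) hbound
    (y₀ := 0) ⟨neg_neg_of_pos hr0, hr0⟩ (by simp) (abs_lt.1 hxr)
  have hsum : HasSum (fun n : ℕ => x ^ n / ((n : ℝ) + 1)) (-log (1 - x) / x) := by
    refine ((hasSum_pow_div_log_of_abs_lt_one hx).div_const x).congr_fun fun n => ?_
    rw [pow_succ]
    field_simp
  rwa [hsum.tsum_eq] at hderiv

lemma tendsto_log_mul_log_one_sub :
    Tendsto (fun x => log x * log (1 - x)) (𝓝[>] 0) (𝓝 0) := by
  have hslope : Tendsto (fun x => x⁻¹ * log (1 - x)) (𝓝[>] 0) (𝓝 (-1)) := by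
    have hd : HasDerivAt (fun x => log (1 - x)) (-1) 0 := by
      simpa using ((hasDerivAt_id (0 : ℝ)).const_sub 1).log (by norm_num)
    refine ((hasDerivAt_iff_tendsto_slope.1 hd).mono_left
      (nhdsWithin_mono _ fun x (hx : 0 < x) => hx.ne')).congr' (Eventually.of_forall fun x => ?_)
    simp [slope_def_field, div_eq_inv_mul]
  have hmul_log : Tendsto (fun x => x * log x) (𝓝[>] 0) (𝓝 0) := by
    simpa using continuous_mul_log.continuousAt.tendsto.mono_left (nhdsWithin_le_nhds (a := 0))
  have hprod := hmul_log.mul hslope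
  rw [zero_mul] at hprod
  refine hprod.congr' ?_
  filter_upwards [self_mem_nhdsWithin] with x (hx : 0 < x)
  field_simp

lemma hasDerivAt_dilog_add_dilog_one_sub {x : ℝ} (hx : x ∈ Ioo 0 1) :
    HasDerivAt (fun y => dilog y + dilog (1 - y) + log y * log (1 - y)) 0 x := by
  obtain ⟨hx0, hx1⟩ := hx
  have hsub : HasDerivAt (fun y => 1 - y) (-1) x := by simpa using (hasDerivAt_id x).const_sub 1
  have h1x : 1 - x ≠ 0 := sub_ne_zero.2 hx1.ne'
  have h1 := hasDerivAt_dilog hx0.ne' (abs_lt.2 ⟨by linarith, hx1⟩)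
  have h2 := (hasDerivAt_dilog h1x (abs_lt.2 ⟨by linarith, by linarith⟩)).comp x hsub
  have h3 := (Real.hasDerivAt_log hx0.ne').mul (hsub.log h1x)
  refine ((h1.add h2).add h3).congr_deriv ?_
  simp only [sub_sub_cancel]
  field_simp
  ring

lemma tendsto_dilog_add_dilog_one_sub :
    Tendsto (fun y => dilog y + dilog (1 - y) + log y * log (1 - y)) (𝓝[>] 0) (𝓝 (dilog 1)) := by
  have h1 : Tendsto dilog (𝓝[>] 0) (𝓝 0) := by
    have h0 := continuousOn_dilog.continuousAt (Icc_mem_nhds (by norm_num : (-1 : ℝ) < 0) one_pos)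
    simpa [dilog] using h0.tendsto.mono_left nhdsWithin_le_nhds
  have h2 : Tendsto (fun y => dilog (1 - y)) (𝓝[>] 0) (𝓝 (dilog 1)) := by
    refine (continuousOn_dilog 1 (by norm_num)).tendsto.comp
      (tendsto_nhdsWithin_of_tendsto_nhds_of_eventually_within _ ?_ ?_)
    · simpa using ((continuous_sub_left (1 : ℝ)).tendsto 0).mono_left nhdsWithin_le_nhds
    · filter_upwards [Ioo_mem_nhdsGT (zero_lt_one' ℝ)] with y hy
      exact ⟨by linarith [hy.2], by linarith [hy.1]⟩
  simpa using (h1.add h2).add tendsto_log_mul_log_one_sub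

lemma dilog_add_dilog_one_sub {x : ℝ} (hx : x ∈ Ioo 0 1) :
    dilog x + dilog (1 - x) + log x * log (1 - x) = dilog 1 := by
  obtain ⟨c, hc⟩ := isOpen_Ioo.exists_is_const_of_deriv_eq_zero isPreconnected_Ioo
    (fun y hy => (hasDerivAt_dilog_add_dilog_one_sub hy).differentiableAt.differentiableWithinAt)
    (fun y hy => (hasDerivAt_dilog_add_dilog_one_sub hy).deriv)
  have hconst : Tendsto (fun y => dilog y + dilog (1 - y) + log y * log (1 - y)) (𝓝[>] 0) (𝓝 c) :=
    tendsto_const_nhds.congr'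
      (eventually_of_mem (Ioo_mem_nhdsGT one_pos) fun y hy => (hc y hy).symm)
  rw [tendsto_nhds_unique tendsto_dilog_add_dilog_one_sub hconst]
  exact hc x hx

noncomputable def logPartialSum (n : ℕ) (b : ℝ) : ℝ :=
  ∑ k ∈ Finset.range n, b ^ (k + 1) / ((k : ℝ) + 1)

/-- `∑_{1 ≤ k ≤ m} aᵐ bᵏ / (m k)`, the part of `log (1 - a) * log (1 - b)` with `k ≤ m`. -/
noncomputable def lowerLogSum (a b : ℝ) : ℝ :=
  ∑' m : ℕ, a ^ (m + 1) / ((m : ℝ) + 1) * logPartialSum (m + 1) b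

lemma logPartialSum_succ (n : ℕ) (b : ℝ) :
    logPartialSum (n + 1) b = logPartialSum n b + b ^ (n + 1) / ((n : ℝ) + 1) :=
  Finset.sum_range_succ _ _

lemma abs_logPartialSum_le {b : ℝ} (hb : |b| ≤ 1) (n : ℕ) : |logPartialSum n b| ≤ n := by
  refine (Finset.abs_sum_le_sum_abs _ _).trans ?_
  calc ∑ k ∈ Finset.range n, |b ^ (k + 1) / ((k : ℝ) + 1)| ≤ ∑ _k ∈ Finset.range n, (1 : ℝ) := by
        refine Finset.sum_le_sum fun k _ => ?_
        rw [abs_div, abs_pow, abs_of_pos (by positivity : (0 : ℝ) < k + 1)]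
        exact div_le_one_of_le₀ ((pow_le_one₀ (abs_nonneg b) hb).trans (by simp)) (by positivity)
    _ = n := by simp

lemma abs_geom_sum_le {b : ℝ} (hb : |b| ≤ 1) (n : ℕ) : |∑ k ∈ Finset.range n, b ^ k| ≤ n := by
  refine (Finset.abs_sum_le_sum_abs _ _).trans ?_
  calc ∑ k ∈ Finset.range n, |b ^ k| ≤ ∑ _k ∈ Finset.range n, (1 : ℝ) :=
        Finset.sum_le_sum fun k _ => by rw [abs_pow]; exact pow_le_one₀ (abs_nonneg b) hb
    _ = n := by simp

lemma hasDerivAt_logPartialSum (n : ℕ) (b : ℝ) :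
    HasDerivAt (logPartialSum n) (∑ k ∈ Finset.range n, b ^ k) b := by
  unfold logPartialSum
  exact HasDerivAt.fun_sum fun k _ => hasDerivAt_pow_succ_div_succ k b

lemma hasSum_logPartialSum_tail {b : ℝ} (hb : |b| < 1) (m : ℕ) :
    HasSum (fun j : ℕ => b ^ (m + 2 + j) / ((m : ℝ) + 2 + j))
      (-log (1 - b) - logPartialSum (m + 1) b) := by
  refine ((hasSum_nat_add_iff' (m + 1)).2 (hasSum_pow_div_log_of_abs_lt_one hb)).congr_fun
    fun j => ?_
  rw [show j + (m + 1) + 1 = m + 2 + j by ring]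
  push_cast
  ring

lemma abs_pow_mul_logPartialSum_le (a : ℝ) {b : ℝ} (hb : |b| ≤ 1) (m : ℕ) :
    |a ^ m * logPartialSum (m + 1) b| ≤ ((m : ℝ) + 1) * |a| ^ m := by
  rw [abs_mul, abs_pow, mul_comm]
  gcongr
  exact_mod_cast abs_logPartialSum_le hb (m + 1)

lemma abs_pow_succ_div_mul_le (a : ℝ) {x : ℝ} (m : ℕ) (hx : |x| ≤ (m : ℝ) + 1) :
    |a ^ (m + 1) / ((m : ℝ) + 1) * x| ≤ |a| ^ (m + 1) := by
  rw [abs_mul, abs_div, abs_pow, abs_of_pos (by positivity : (0 : ℝ) < m + 1)]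
  calc |a| ^ (m + 1) / ((m : ℝ) + 1) * |x| ≤ |a| ^ (m + 1) / ((m : ℝ) + 1) * ((m : ℝ) + 1) := by
        gcongr
    _ = |a| ^ (m + 1) := by field_simp

lemma summable_lowerLogSum {a b : ℝ} (ha : |a| < 1) (hb : |b| ≤ 1) :
    Summable (fun m : ℕ => a ^ (m + 1) / ((m : ℝ) + 1) * logPartialSum (m + 1) b) :=
  .of_norm_bounded ((summable_geometric_of_lt_one (abs_nonneg a) ha).mul_left |a|) fun m =>
    (abs_pow_succ_div_mul_le a m (by exact_mod_cast abs_logPartialSum_le hb (m + 1))).trans_eq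
      (pow_succ' _ _)

lemma lowerLogSum_zero_right (a : ℝ) : lowerLogSum a 0 = 0 := by
  simp [lowerLogSum, logPartialSum]

lemma summable_pow_mul_logPartialSum {a b : ℝ} (ha : |a| < 1) (hb : |b| ≤ 1) :
    Summable (fun m : ℕ => a ^ m * logPartialSum (m + 1) b) :=
  .of_norm_bounded (summable_succ_mul_pow (abs_nonneg a) ha) (abs_pow_mul_logPartialSum_le a hb)

lemma summable_pow_succ_div_mul_geom_sum {a b : ℝ} (ha : |a| < 1) (hb : |b| ≤ 1) :
    Summable (fun m : ℕ => a ^ (m + 1) / ((m : ℝ) + 1) * ∑ k ∈ Finset.range (m + 1), b ^ k) :=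
  .of_norm_bounded ((summable_geometric_of_lt_one (abs_nonneg a) ha).mul_left |a|) fun m =>
    (abs_pow_succ_div_mul_le a m (by exact_mod_cast abs_geom_sum_le hb (m + 1))).trans_eq
      (pow_succ' _ _)

lemma mul_one_sub_mul_tsum_pow_mul_logPartialSum {a b : ℝ} (ha : |a| < 1) (hb : |b| ≤ 1) :
    a * (1 - a) * ∑' m : ℕ, a ^ m * logPartialSum (m + 1) b = -log (1 - a * b) := by
  set S := ∑' m : ℕ, a ^ m * logPartialSum (m + 1) b
  have hS : HasSum (fun m : ℕ => a ^ m * logPartialSum (m + 1) b) S :=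
    (summable_pow_mul_logPartialSum ha hb).hasSum
  have hshift : HasSum (fun m : ℕ => a ^ m * logPartialSum m b) (a * S) := by
    refine (hasSum_nat_add_iff' 1).1 ?_
    simpa [logPartialSum, pow_succ, mul_assoc, mul_comm, mul_left_comm] using hS.mul_left a
  have hlog : HasSum
      (fun m : ℕ => a * (a ^ m * logPartialSum (m + 1) b - a ^ m * logPartialSum m b))
      (-log (1 - a * b)) := by
    refine (hasSum_pow_div_log_of_abs_lt_one (abs_mul_lt_one ha hb)).congr_fun fun m => ?_
    rw [logPartialSum_succ]
    ring
  calc a * (1 - a) * S = a * (S - a * S) := by ring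
    _ = -log (1 - a * b) := ((hS.sub hshift).mul_left a).unique hlog

lemma sub_one_mul_tsum_pow_succ_div_mul_geom_sum {a b : ℝ} (ha : |a| < 1) (hb : |b| ≤ 1) :
    (b - 1) * ∑' m : ℕ, a ^ (m + 1) / ((m : ℝ) + 1) * ∑ k ∈ Finset.range (m + 1), b ^ k
      = log (1 - a) - log (1 - a * b) := by
  rw [← tsum_mul_left]
  refine (((hasSum_pow_div_log_of_abs_lt_one (abs_mul_lt_one ha hb)).sub
    (hasSum_pow_div_log_of_abs_lt_one ha)).congr_fun fun m => ?_).tsum_eq.trans (by ring)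
  linear_combination (a ^ (m + 1) / ((m : ℝ) + 1)) * geom_sum_mul b (m + 1)

open ContinuousLinearMap in
lemma hasFDerivAt_lowerLogSum_term (m : ℕ) (z : ℝ × ℝ) :
    HasFDerivAt (fun z : ℝ × ℝ => z.1 ^ (m + 1) / ((m : ℝ) + 1) * logPartialSum (m + 1) z.2)
      ((z.1 ^ m * logPartialSum (m + 1) z.2) • fst ℝ ℝ ℝ
        + (z.1 ^ (m + 1) / ((m : ℝ) + 1) * ∑ k ∈ Finset.range (m + 1), z.2 ^ k) • snd ℝ ℝ ℝ) z := by
  have h1 := (hasDerivAt_pow_succ_div_succ m z.1).comp_hasFDerivAt z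
    (hasFDerivAt_fst (𝕜 := ℝ) (p := z))
  have h2 := (hasDerivAt_logPartialSum (m + 1) z.2).comp_hasFDerivAt z
    (hasFDerivAt_snd (𝕜 := ℝ) (p := z))
  refine (h1.mul h2).congr_fderiv ?_
  ext <;> simp; ring

open ContinuousLinearMap in
lemma hasFDerivAt_lowerLogSum {a b : ℝ} (ha0 : a ≠ 0) (ha : |a| < 1) (hb : |b| < 1) :
    HasFDerivAt (fun z : ℝ × ℝ => lowerLogSum z.1 z.2)
      ((-log (1 - a * b) / (a * (1 - a))) • fst ℝ ℝ ℝ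
        + ((log (1 - a) - log (1 - a * b)) / (b - 1)) • snd ℝ ℝ ℝ) (a, b) := by
  obtain ⟨r, har, hr1⟩ := exists_between ha
  have hr0 : 0 ≤ r := (abs_nonneg a).trans har.le
  have hbound (m : ℕ) (z : ℝ × ℝ) (hz : z ∈ Ioo (-r) r ×ˢ Ioo (-1) 1) :
      ‖(z.1 ^ m * logPartialSum (m + 1) z.2) • fst ℝ ℝ ℝ
        + (z.1 ^ (m + 1) / ((m : ℝ) + 1) * ∑ k ∈ Finset.range (m + 1), z.2 ^ k) • snd ℝ ℝ ℝ‖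
        ≤ ((m : ℝ) + 1) * r ^ m + r * r ^ m := by
    have hz1 : |z.1| ≤ r := abs_le.2 ⟨hz.1.1.le, hz.1.2.le⟩
    have hz2 : |z.2| ≤ 1 := abs_le.2 ⟨hz.2.1.le, hz.2.2.le⟩
    refine (norm_add_le _ _).trans (add_le_add ?_ ?_)
    · refine (norm_smul_le _ _).trans
        ((mul_le_of_le_one_right (norm_nonneg _) (norm_fst_le ℝ ℝ ℝ)).trans ?_)
      exact (abs_pow_mul_logPartialSum_le _ hz2 m).trans (by gcongr)
    · refine (norm_smul_le _ _).trans
        ((mul_le_of_le_one_right (norm_nonneg _) (norm_snd_le ℝ ℝ ℝ)).trans ?_)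
      exact (abs_pow_succ_div_mul_le _ m (by exact_mod_cast abs_geom_sum_le hz2 (m + 1))).trans
        ((pow_le_pow_left₀ (abs_nonneg _) hz1 _).trans_eq (pow_succ' _ _))
  have hab : (a, b) ∈ Ioo (-r) r ×ˢ Ioo (-1) 1 := ⟨abs_lt.1 har, abs_lt.1 hb⟩
  have hderiv := hasFDerivAt_tsum_of_isPreconnected
    ((summable_succ_mul_pow hr0 hr1).add ((summable_geometric_of_lt_one hr0 hr1).mul_left r))
    (isOpen_Ioo.prod isOpen_Ioo) ((convex_Ioo _ _).prod (convex_Ioo _ _)).isPreconnected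
    (fun m z _ => hasFDerivAt_lowerLogSum_term m z) hbound hab (summable_lowerLogSum ha hb.le) hab
  have hS1 := summable_pow_mul_logPartialSum ha hb.le
  have hS2 := summable_pow_succ_div_mul_geom_sum ha hb.le
  have hS1_eq : ∑' m : ℕ, a ^ m * logPartialSum (m + 1) b = -log (1 - a * b) / (a * (1 - a)) := by
    rw [eq_div_iff (mul_ne_zero ha0 (sub_ne_zero.2 (abs_lt.1 ha).2.ne')), mul_comm]
    exact mul_one_sub_mul_tsum_pow_mul_logPartialSum ha hb.le
  have hS2_eq : ∑' m : ℕ, a ^ (m + 1) / ((m : ℝ) + 1) * ∑ k ∈ Finset.range (m + 1), b ^ k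
      = (log (1 - a) - log (1 - a * b)) / (b - 1) := by
    rw [eq_div_iff (sub_ne_zero.2 (abs_lt.1 hb).2.ne), mul_comm]
    exact sub_one_mul_tsum_pow_succ_div_mul_geom_sum ha hb.le
  dsimp only at hderiv
  rwa [(hS1.smul_const _).tsum_add (hS2.smul_const _), hS1.tsum_smul_const, hS2.tsum_smul_const,
    hS1_eq, hS2_eq] at hderiv

lemma HasDerivAt.lowerLogSum {A B : ℝ → ℝ} {A' B' x : ℝ} (hA : HasDerivAt A A' x)
    (hB : HasDerivAt B B' x) (hA0 : A x ≠ 0) (hA1 : |A x| < 1) (hB1 : |B x| < 1) :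
    HasDerivAt (fun y => lowerLogSum (A y) (B y))
      (-Real.log (1 - A x * B x) / (A x * (1 - A x)) * A'
        + (Real.log (1 - A x) - Real.log (1 - A x * B x)) / (B x - 1) * B') x := by
  refine ((hasFDerivAt_lowerLogSum hA0 hA1 hB1).comp_hasDerivAt x (hA.prodMk hB)).congr_deriv ?_
  simp

lemma hasDerivAt_lowerLogSum_add_lowerLogSum {q x : ℝ} (hq : 0 < q) (hx0 : 0 < x)
    (hx1 : x < 1 - q / 2) (hx2 : x < 2 - 2 * q) :
    HasDerivAt (fun x => lowerLogSum (1 - x) (1 - q / (1 - x))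
      + lowerLogSum (1 - q) (1 - x / (1 - q)) - log x * log q - dilog (1 - x)) 0 x := by
  have h1x : 0 < 1 - x := by linarith
  have h1q : 0 < 1 - q := by linarith
  have hsub : HasDerivAt (fun y => 1 - y) (-1) x := by simpa using (hasDerivAt_id x).const_sub 1
  have hB1 : HasDerivAt (fun y => 1 - q / (1 - y)) (-(q / (1 - x) ^ 2)) x := by
    simpa [div_eq_mul_inv] using ((hsub.inv h1x.ne').const_mul q).const_sub 1
  have hB2 : HasDerivAt (fun y => 1 - y / (1 - q)) (-(1 / (1 - q))) x := by
    simpa using ((hasDerivAt_id x).div_const (1 - q)).const_sub 1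
  have h1 := hsub.lowerLogSum hB1 h1x.ne' (abs_lt.2 ⟨by linarith, by linarith⟩)
    (abs_one_sub_div_lt_one hq (by linarith))
  have h2 := (hasDerivAt_const x (1 - q)).lowerLogSum hB2 h1q.ne'
    (abs_lt.2 ⟨by linarith, by linarith⟩) (abs_one_sub_div_lt_one hx0 (by linarith))
  have h3 := (Real.hasDerivAt_log hx0.ne').mul_const (log q)
  have h4 := (hasDerivAt_dilog h1x.ne' (abs_lt.2 ⟨by linarith, by linarith⟩)).comp x hsub
  have e1 : 1 - (1 - x) * (1 - q / (1 - x)) = x + q := by field_simp; ring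
  have e2 : 1 - (1 - q) * (1 - x / (1 - q)) = x + q := by field_simp; ring
  refine (((h1.add h2).sub h3).sub h4).congr_deriv ?_
  simp only [e1, e2, sub_sub_cancel, sub_sub_cancel_left]
  field_simp [hx0.ne', hq.ne']
  ring

lemma lowerLogSum_add_lowerLogSum {p q : ℝ} (hp : 0 < p) (hq : 0 < q) (hpq : p + q < 1) :
    lowerLogSum (1 - p) (1 - q / (1 - p)) + lowerLogSum (1 - q) (1 - p / (1 - q))
      = log p * log q + dilog (1 - p) + dilog (1 - q) - dilog 1 := by
  set f : ℝ → ℝ := fun x => lowerLogSum (1 - x) (1 - q / (1 - x))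
    + lowerLogSum (1 - q) (1 - x / (1 - q)) - log x * log q - dilog (1 - x)
  -- on this interval both second arguments stay in `(-1, 1)`; it contains `p` and `1 - q`
  have hderiv : ∀ x ∈ Ioo 0 (min (1 - q / 2) (2 - 2 * q)), HasDerivAt f 0 x :=
    fun x ⟨hx0, hx⟩ => hasDerivAt_lowerLogSum_add_lowerLogSum hq hx0 (lt_min_iff.1 hx).1
      (lt_min_iff.1 hx).2
  have h1q : 0 < 1 - q := by linarith
  have hconst : f p = f (1 - q) :=
    isOpen_Ioo.is_const_of_deriv_eq_zero isPreconnected_Ioo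
      (fun x hx => (hderiv x hx).differentiableAt.differentiableWithinAt)
      (fun x hx => (hderiv x hx).deriv) ⟨hp, lt_min (by linarith) (by linarith)⟩
      ⟨h1q, lt_min (by linarith) (by linarith)⟩
  simp only [f, sub_sub_cancel, div_self hq.ne', div_self h1q.ne', sub_self,
    lowerLogSum_zero_right] at hconst
  linear_combination hconst - dilog_add_dilog_one_sub ⟨hq, by linarith⟩

lemma hasSum_upperLogSum_row (a : ℝ) {b : ℝ} (hb : |b| < 1) (m : ℕ) :
    HasSum (fun j : ℕ => a ^ (m + 1) * b ^ (m + 2 + j) / ((m + 1 : ℝ) * (m + 2 + j : ℝ)))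
      (a ^ (m + 1) / ((m : ℝ) + 1) * (-log (1 - b) - logPartialSum (m + 1) b)) :=
  ((hasSum_logPartialSum_tail hb m).mul_left (a ^ (m + 1) / ((m : ℝ) + 1))).congr_fun fun j => by
    field_simp

lemma hasSum_upperLogSum {a b : ℝ} (ha : |a| < 1) (hb : |b| < 1) :
    HasSum (fun m : ℕ => a ^ (m + 1) / ((m : ℝ) + 1) * (-log (1 - b) - logPartialSum (m + 1) b))
      (log (1 - a) * log (1 - b) - lowerLogSum a b) := by
  have h := ((hasSum_pow_div_log_of_abs_lt_one ha).mul_right (-log (1 - b))).sub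
    (summable_lowerLogSum ha hb.le).hasSum
  rw [neg_mul_neg] at h
  exact h.congr_fun fun m => by ring

/-- For `p, q ∈ (0,1)` with `p + q < 1`,
`∑_{m=1}^∞ ∑_{k=m+1}^∞ [(1−p)^m (1−q/(1−p))^k + (1−q)^m (1−p/(1−q))^k]/(mk)
 = log p · log q − log q · log(1−q) − log p · log(1−p) + ∑_{m=1}^∞ [1 − (1−p)^m − (1−q)^m]/m²`.
(The inner index `k` ranges over `k ≥ m+1`; here `m = m'+1`, `k = m'+2+j` for `m', j : ℕ`.) -/
theorem dilog_double_sum_identity (p q : ℝ)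
    (hp : p ∈ Set.Ioo (0 : ℝ) 1) (hq : q ∈ Set.Ioo (0 : ℝ) 1) (hpq : p + q < 1) :
    ∑' m : ℕ, ∑' j : ℕ,
        ((1 - p) ^ (m + 1) * (1 - q / (1 - p)) ^ (m + 2 + j)
          + (1 - q) ^ (m + 1) * (1 - p / (1 - q)) ^ (m + 2 + j))
          / ((m + 1 : ℝ) * (m + 2 + j : ℝ))
      = Real.log p * Real.log q - Real.log q * Real.log (1 - q)
          - Real.log p * Real.log (1 - p)
        + ∑' m : ℕ, (1 - (1 - p) ^ (m + 1) - (1 - q) ^ (m + 1)) / (m + 1 : ℝ) ^ 2 := by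
  obtain ⟨hp0, hp1⟩ := hp
  obtain ⟨hq0, hq1⟩ := hq
  have ha1 : |1 - p| < 1 := abs_lt.2 ⟨by linarith, by linarith⟩
  have ha2 : |1 - q| < 1 := abs_lt.2 ⟨by linarith, by linarith⟩
  have hb1 : |1 - q / (1 - p)| < 1 := abs_one_sub_div_lt_one hq0 (by linarith)
  have hb2 : |1 - p / (1 - q)| < 1 := abs_one_sub_div_lt_one hp0 (by linarith)
  have hupper : ∑' m : ℕ, ∑' j : ℕ,
        ((1 - p) ^ (m + 1) * (1 - q / (1 - p)) ^ (m + 2 + j)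
          + (1 - q) ^ (m + 1) * (1 - p / (1 - q)) ^ (m + 2 + j))
          / ((m + 1 : ℝ) * (m + 2 + j : ℝ))
      = log p * log (q / (1 - p)) - lowerLogSum (1 - p) (1 - q / (1 - p))
        + (log q * log (p / (1 - q)) - lowerLogSum (1 - q) (1 - p / (1 - q))) := by
    refine (tsum_congr fun m => ?_).trans
      (((hasSum_upperLogSum ha1 hb1).add (hasSum_upperLogSum ha2 hb2)).tsum_eq.trans ?_)
    · simp_rw [add_div]
      exact ((hasSum_upperLogSum_row _ hb1 m).add (hasSum_upperLogSum_row _ hb2 m)).tsum_eq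
    · simp only [sub_sub_cancel]
  have hzeta : ∑' m : ℕ, (1 - (1 - p) ^ (m + 1) - (1 - q) ^ (m + 1)) / (m + 1 : ℝ) ^ 2
      = dilog 1 - dilog (1 - p) - dilog (1 - q) :=
    ((((hasSum_dilog abs_one.le).sub (hasSum_dilog ha1.le)).sub
      (hasSum_dilog ha2.le)).congr_fun fun m => by simp [sub_div]).tsum_eq
  rw [hupper, hzeta, log_div hq0.ne' (by linarith), log_div hp0.ne' (by linarith)]
  linear_combination -lowerLogSum_add_lowerLogSum hp0 hq0 hpq
end

section
/- Let p be a probability mass function on the positive integers with p_j = p(j) monotonically nonincreasing in j, and suppose there exist constants M > 0 and α ∈ (0,1) such that p_j ≤ M j^{−1/α} for all j. Fix a positive integer m. Then there exists a constant C > 0, not depending on k, such that ∑_{j=1}^{∞} p_j^m (1−p_j)^k ≤ C / k^{m−α} for all positive integers k. Moreover, if p_j = o(j^{−1/α}) as j → ∞, then ∑_{j=1}^{∞} p_j^m (1−p_j)^k = o(k^{−(m−α)}) as k → ∞. -/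
/-!
Every term is small for two reasons. Since `(1 - x)^k ≤ e^{-kx}` and `t^m e^{-t} ≤ m!`, each
`p_j^m (1 - p_j)^k` is at most `m!/k^m`; and where `p_j ≤ ε j^{-1/α}` it is at most
`ε^m j^{-m/α}`, with `m/α > 1`. Cutting the sum at `J = ⌈δ k^α⌉` and comparing the tail with
`∫_J^∞ x^{-m/α} dx` bounds it by `(2 δ m! + ε^m δ^{1-m/α}/(m/α - 1)) k^{α-m}`. With `δ = 1`,
`ε = M` this is the first claim. If `p_j = o(j^{-1/α})`, the tail bound holds with any `ε > 0`
beyond some index, which lies below `δ k^α` for large `k`; choosing `δ` and then `ε` small gives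
the second.
-/

open Filter Asymptotics Finset Real Nat

lemma mul_pow_mul_one_sub_pow_le_factorial {x : ℝ} (hx0 : 0 ≤ x) (hx1 : x ≤ 1) (k m : ℕ) :
    (k * x) ^ m * (1 - x) ^ k ≤ m ! := by
  have hexp : (1 - x) ^ k ≤ exp (-(k * x)) := calc
    (1 - x) ^ k ≤ exp (-x) ^ k := pow_le_pow_left₀ (by linarith) (one_sub_le_exp_neg x) k
    _ = exp (-(k * x)) := by rw [← exp_nat_mul]; ring_nf
  have hfact : (k * x) ^ m ≤ m ! * exp (k * x) := by
    rw [← div_le_iff₀' (by positivity)]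
    exact pow_div_factorial_le_exp _ (by positivity) m
  calc (k * x) ^ m * (1 - x) ^ k ≤ (k * x) ^ m * exp (-(k * x)) := by gcongr
    _ ≤ m ! := by rwa [exp_neg, ← div_eq_mul_inv, div_le_iff₀ (exp_pos _)]

lemma sum_range_rpow_neg_le {x₀ s : ℝ} (hx₀ : 0 < x₀) (hs : 1 < s) (N : ℕ) :
    ∑ i ∈ range N, (x₀ + (i + 1 : ℕ)) ^ (-s) ≤ x₀ ^ (1 - s) / (s - 1) := by
  have hanti : AntitoneOn (fun x : ℝ ↦ x ^ (-s)) (Set.Icc x₀ (x₀ + N)) :=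
    fun a ha b _ hab ↦ rpow_le_rpow_of_nonpos (hx₀.trans_le ha.1) hab (by linarith)
  have hzero : (0 : ℝ) ∉ Set.uIcc x₀ (x₀ + N) := by
    rw [Set.uIcc_of_le (by simp)]
    exact fun h ↦ hx₀.not_ge h.1
  calc ∑ i ∈ range N, (x₀ + (i + 1 : ℕ)) ^ (-s) ≤ ∫ x in x₀..x₀ + N, x ^ (-s) :=
        hanti.sum_le_integral
    _ = (x₀ ^ (1 - s) - (x₀ + N) ^ (1 - s)) / (s - 1) := by
        rw [integral_rpow (Or.inr ⟨by linarith, hzero⟩), ← neg_div_neg_eq]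
        ring_nf
    _ ≤ x₀ ^ (1 - s) / (s - 1) := by
        gcongr
        exact sub_le_self _ (by positivity)

lemma tsum_le_of_head_le_of_tail_le_rpow {g : ℕ → ℝ} (hg0 : ∀ n, 0 ≤ g n) (hg : Summable g)
    {J : ℕ} (hJ : 0 < J) {A B s : ℝ} (hB : 0 ≤ B) (hs : 1 < s) (hhead : ∀ n < J, g n ≤ A)
    (htail : ∀ n, J ≤ n → g n ≤ B * ((n + 1 : ℕ) : ℝ) ^ (-s)) :
    ∑' n, g n ≤ J * A + B * ((J : ℝ) ^ (1 - s) / (s - 1)) := by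
  rw [← hg.sum_add_tsum_nat_add J]
  gcongr
  · simpa using sum_le_card_nsmul (range J) g A fun n hn ↦ hhead n (mem_range.1 hn)
  · refine Real.tsum_le_of_sum_range_le (fun n ↦ hg0 _) fun N ↦ ?_
    calc ∑ i ∈ range N, g (i + J) ≤ ∑ i ∈ range N, B * ((J : ℝ) + (i + 1 : ℕ)) ^ (-s) := by
          refine sum_le_sum fun i _ ↦ ?_
          have h := htail (i + J) (by omega)
          rwa [show ((i + J + 1 : ℕ) : ℝ) = J + (i + 1 : ℕ) by push_cast; ring] at h
      _ ≤ B * ((J : ℝ) ^ (1 - s) / (s - 1)) := by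
          rw [← mul_sum]
          exact mul_le_mul_of_nonneg_left (sum_range_rpow_neg_le (by positivity) hs N) hB

lemma pow_mul_one_sub_pow_le_pow {x : ℝ} (hx0 : 0 ≤ x) (hx1 : x ≤ 1) (m k : ℕ) :
    x ^ m * (1 - x) ^ k ≤ x ^ m :=
  mul_le_of_le_one_right (pow_nonneg hx0 m) (pow_le_one₀ (sub_nonneg.2 hx1) (by linarith))

section MissingMass

variable {p : ℕ+ → ℝ} (hp0 : ∀ j, 0 ≤ p j) (hp1 : ∀ j, p j ≤ 1) (hps : Summable p)
include hp0 hp1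

lemma pow_mul_one_sub_pow_nonneg (m k : ℕ) (j : ℕ+) : 0 ≤ p j ^ m * (1 - p j) ^ k :=
  mul_nonneg (pow_nonneg (hp0 j) m) (pow_nonneg (sub_nonneg.2 (hp1 j)) k)

include hps in
lemma tsum_pow_mul_one_sub_pow_le {m k J : ℕ} (hk : 0 < k) (hJ : 0 < J) {α ε : ℝ}
    (hα : 0 < α) (hαm : α < m) (hε : 0 ≤ ε)
    (htail : ∀ j : ℕ+, J < (j : ℕ) → p j ≤ ε * (j : ℝ) ^ (-(1 / α))) :
    ∑' j : ℕ+, p j ^ m * (1 - p j) ^ k ≤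
      J * (m ! / (k : ℝ) ^ m) + ε ^ m * ((J : ℝ) ^ (1 - m / α) / (m / α - 1)) := by
  rw [← Equiv.pnatEquivNat.symm.tsum_eq]
  have hs : 1 < (m : ℝ) / α := by rwa [one_lt_div hα]
  refine tsum_le_of_head_le_of_tail_le_rpow (fun n ↦ pow_mul_one_sub_pow_nonneg hp0 hp1 m k _)
    ?_ hJ (pow_nonneg hε m) hs (fun n _ ↦ ?_) (fun n hn ↦ ?_)
  · have hm : m ≠ 0 := by rintro rfl; simp at hαm; linarith
    refine (Equiv.summable_iff _).2 (hps.of_nonneg_of_le (pow_mul_one_sub_pow_nonneg hp0 hp1 m k)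
      fun j ↦ (pow_mul_one_sub_pow_le_pow (hp0 j) (hp1 j) m k).trans ?_)
    exact pow_le_of_le_one (hp0 j) (hp1 j) hm
  · rw [le_div_iff₀ (by positivity), mul_right_comm, ← mul_pow, mul_comm _ (k : ℝ)]
    exact mul_pow_mul_one_sub_pow_le_factorial (hp0 _) (hp1 _) k m
  · set j := Equiv.pnatEquivNat.symm n
    have hj : ((n + 1 : ℕ) : ℝ) = (j : ℝ) := by simp [j]
    have hpj : p j ≤ ε * (j : ℝ) ^ (-(1 / α)) := htail j (by simp [j]; omega)
    calc p j ^ m * (1 - p j) ^ k ≤ p j ^ m := pow_mul_one_sub_pow_le_pow (hp0 j) (hp1 j) m k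
      _ ≤ (ε * (j : ℝ) ^ (-(1 / α))) ^ m := pow_le_pow_left₀ (hp0 j) hpj m
      _ = ε ^ m * ((n + 1 : ℕ) : ℝ) ^ (-(m / α)) := by
          rw [hj, mul_pow, ← rpow_mul_natCast (by positivity)]
          ring_nf

include hps in
lemma tsum_pow_mul_one_sub_pow_le_mul_rpow {m k : ℕ} {α ε δ : ℝ} (hα : 0 < α) (hαm : α < m)
    (hε : 0 ≤ ε) (hx : 1 ≤ δ * (k : ℝ) ^ α)
    (htail : ∀ j : ℕ+, δ * (k : ℝ) ^ α < j → p j ≤ ε * (j : ℝ) ^ (-(1 / α))) :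
    ∑' j : ℕ+, p j ^ m * (1 - p j) ^ k ≤
      (2 * δ * m ! + ε ^ m * (δ ^ (1 - m / α) / (m / α - 1))) * (k : ℝ) ^ (α - m) := by
  set x := δ * (k : ℝ) ^ α
  set J := ⌈x⌉₊
  have hk : 0 < k := by
    rcases Nat.eq_zero_or_pos k with rfl | hk
    · simp [x, zero_rpow hα.ne'] at hx; linarith
    · exact hk
  have hk0 : (0 : ℝ) < k := by exact_mod_cast hk
  have hδ : 0 < δ := pos_of_mul_pos_left (by linarith) (rpow_nonneg hk0.le α)
  have hs : 1 < (m : ℝ) / α := by rwa [one_lt_div hα]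
  have hJ : 0 < J := Nat.ceil_pos.2 (by linarith)
  have hxJ : x ≤ J := Nat.le_ceil x
  have hJx : (J : ℝ) ≤ 2 * x := by linarith [Nat.ceil_lt_add_one (by linarith : 0 ≤ x)]
  have hpow : (k : ℝ) ^ α / (k : ℝ) ^ m = (k : ℝ) ^ (α - m) := by
    rw [rpow_sub hk0, rpow_natCast]
  have hhead : (J : ℝ) * (m ! / (k : ℝ) ^ m) ≤ 2 * δ * m ! * (k : ℝ) ^ (α - m) := calc
    (J : ℝ) * (m ! / (k : ℝ) ^ m) ≤ 2 * x * (m ! / (k : ℝ) ^ m) := by gcongr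
    _ = 2 * δ * m ! * (k : ℝ) ^ (α - m) := by rw [← hpow]; ring
  have htail' : (J : ℝ) ^ (1 - m / α) ≤ δ ^ (1 - m / α) * (k : ℝ) ^ (α - m) := calc
    (J : ℝ) ^ (1 - m / α) ≤ x ^ (1 - m / α) :=
      rpow_le_rpow_of_nonpos (by linarith) hxJ (by linarith)
    _ = δ ^ (1 - m / α) * (k : ℝ) ^ (α - m) := by
      rw [mul_rpow hδ.le (rpow_nonneg hk0.le α), ← rpow_mul hk0.le]
      congr 2
      field_simp
  have hJ_tail : ∀ j : ℕ+, J < (j : ℕ) → p j ≤ ε * (j : ℝ) ^ (-(1 / α)) := fun j hj ↦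
    htail j (hxJ.trans_lt (by exact_mod_cast hj))
  calc ∑' j : ℕ+, p j ^ m * (1 - p j) ^ k
      ≤ J * (m ! / (k : ℝ) ^ m) + ε ^ m * ((J : ℝ) ^ (1 - m / α) / (m / α - 1)) :=
        tsum_pow_mul_one_sub_pow_le hp0 hp1 hps hk hJ hα hαm hε hJ_tail
    _ ≤ 2 * δ * m ! * (k : ℝ) ^ (α - m) +
          ε ^ m * (δ ^ (1 - m / α) * (k : ℝ) ^ (α - m) / (m / α - 1)) := by
        gcongr
    _ = _ := by ring

include hps in
theorem exists_tsum_pow_mul_one_sub_pow_le_div_rpow {m : ℕ} {M α : ℝ} (hM : 0 < M)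
    (hα : 0 < α) (hαm : α < m) (hbound : ∀ j : ℕ+, p j ≤ M * (j : ℝ) ^ (-(1 / α))) :
    ∃ C > 0, ∀ k : ℕ, 1 ≤ k →
      ∑' j : ℕ+, p j ^ m * (1 - p j) ^ k ≤ C / (k : ℝ) ^ ((m : ℝ) - α) := by
  have hs : 1 < (m : ℝ) / α := by rwa [one_lt_div hα]
  refine ⟨2 * m ! + M ^ m / (m / α - 1), by positivity, fun k hk ↦ ?_⟩
  have hk1 : (1 : ℝ) ≤ k := by exact_mod_cast hk
  calc ∑' j : ℕ+, p j ^ m * (1 - p j) ^ k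
      ≤ (2 * 1 * m ! + M ^ m * (1 ^ (1 - m / α) / (m / α - 1))) * (k : ℝ) ^ (α - m) :=
        tsum_pow_mul_one_sub_pow_le_mul_rpow hp0 hp1 hps hα hαm hM.le
          (by rw [one_mul]; exact one_le_rpow hk1 hα.le) fun j _ ↦ hbound j
    _ = _ := by rw [one_rpow, ← neg_sub (m : ℝ), rpow_neg (by linarith)]; ring

include hps in
theorem isLittleO_tsum_pow_mul_one_sub_pow {m : ℕ} {α : ℝ} (hα : 0 < α) (hαm : α < m)
    (hlittle : (fun j : ℕ+ ↦ p j) =o[atTop] fun j : ℕ+ ↦ (j : ℝ) ^ (-(1 / α))) :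
    (fun k : ℕ ↦ ∑' j : ℕ+, p j ^ m * (1 - p j) ^ k)
      =o[atTop] fun k : ℕ ↦ (k : ℝ) ^ (-((m : ℝ) - α)) := by
  have hs : 1 < (m : ℝ) / α := by rwa [one_lt_div hα]
  refine isLittleO_iff.2 fun c hc ↦ ?_
  -- `δ` makes the head term `2 δ m!` equal to `c / 2`, then `ε` does the same for the tail term.
  set δ : ℝ := c / (4 * m !)
  set B : ℝ := δ ^ (1 - m / α) / (m / α - 1)
  have hδ : 2 * δ * m ! = c / 2 := by simp only [δ]; field_simp; ring
  have hB : 0 < B := div_pos (by positivity) (by linarith)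
  set ε : ℝ := (c / (2 * B)) ^ ((m : ℝ)⁻¹)
  have hm : m ≠ 0 := by rintro rfl; simp at hαm; linarith
  have hεB : ε ^ m * B = c / 2 := by
    rw [rpow_inv_natCast_pow (by positivity) hm]; field_simp
  obtain ⟨J₀, hJ₀⟩ := eventually_atTop.1 (hlittle.bound (by positivity : 0 < ε))
  have hgrowth : Tendsto (fun k : ℕ ↦ δ * (k : ℝ) ^ α) atTop atTop :=
    (tendsto_rpow_atTop hα).comp tendsto_natCast_atTop_atTop |>.const_mul_atTop (by positivity)
  filter_upwards [hgrowth.eventually_ge_atTop (max 1 (J₀ : ℝ))] with k hk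
  have htail : ∀ j : ℕ+, δ * (k : ℝ) ^ α < j → p j ≤ ε * (j : ℝ) ^ (-(1 / α)) := by
    intro j hj
    have hJ₀j : J₀ ≤ j := by exact_mod_cast (le_max_right _ _).trans (hk.trans hj.le)
    simpa [abs_of_nonneg (hp0 j), abs_of_nonneg (rpow_nonneg (Nat.cast_nonneg _) _)]
      using hJ₀ j hJ₀j
  rw [Real.norm_of_nonneg (tsum_nonneg (pow_mul_one_sub_pow_nonneg hp0 hp1 m k)),
    Real.norm_of_nonneg (rpow_nonneg (Nat.cast_nonneg k) _), neg_sub]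
  calc ∑' j : ℕ+, p j ^ m * (1 - p j) ^ k ≤ (2 * δ * m ! + ε ^ m * B) * (k : ℝ) ^ (α - m) :=
        tsum_pow_mul_one_sub_pow_le_mul_rpow hp0 hp1 hps hα hαm (by positivity)
          ((le_max_left _ _).trans hk) htail
    _ = c * (k : ℝ) ^ (α - m) := by
        rw [hδ, hεB]; ring

end MissingMass

theorem missing_mass_moment_bound_general (p : ℕ+ → ℝ)
    (hp0 : ∀ j, 0 ≤ p j) (hsum : ∑' j, p j = 1)
    (M α : ℝ) (hM : 0 < M) (hα : α ∈ Set.Ioo (0 : ℝ) 1)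
    (hbound : ∀ j : ℕ+, p j ≤ M * (j : ℝ) ^ (-(1 / α)))
    (m : ℕ) (hm : 1 ≤ m) :
    (∃ C > 0, ∀ k : ℕ, 1 ≤ k →
        (∑' j : ℕ+, p j ^ m * (1 - p j) ^ k) ≤ C / (k : ℝ) ^ ((m : ℝ) - α)) ∧
    (((fun j : ℕ+ => p j) =o[atTop] fun j : ℕ+ => (j : ℝ) ^ (-(1 / α))) →
      (fun k : ℕ => ∑' j : ℕ+, p j ^ m * (1 - p j) ^ k)
        =o[atTop] fun k : ℕ => (k : ℝ) ^ (-((m : ℝ) - α))) := by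
  have hps : Summable p := by
    by_contra h
    simp [tsum_eq_zero_of_not_summable h] at hsum
  have hp1 : ∀ j, p j ≤ 1 := fun j ↦ hsum ▸ hps.le_tsum j fun i _ ↦ hp0 i
  have hαm : α < m := hα.2.trans_le (by exact_mod_cast hm)
  exact ⟨exists_tsum_pow_mul_one_sub_pow_le_div_rpow hp0 hp1 hps hM hα.1 hαm hbound,
    isLittleO_tsum_pow_mul_one_sub_pow hp0 hp1 hps hα.1 hαm⟩

/-- missing-mass moments. Let `p` be a nonincreasing pmf on the positive
integers with `p j ≤ M j^{−1/α}` for some `M > 0`, `α ∈ (0,1)`, and fix `m ≥ 1`. Then there is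
`C > 0` with `∑_j p_j^m (1−p_j)^k ≤ C / k^{m−α}` for all `k ≥ 1`; and if moreover
`p_j = o(j^{−1/α})` then `∑_j p_j^m (1−p_j)^k = o(k^{−(m−α)})` as `k → ∞`. -/
theorem missing_mass_moment_bound (p : ℕ+ → ℝ)
    (hp0 : ∀ j, 0 ≤ p j) (hsum : ∑' j, p j = 1) (hmono : Antitone p)
    (M α : ℝ) (hM : 0 < M) (hα : α ∈ Set.Ioo (0 : ℝ) 1)
    (hbound : ∀ j : ℕ+, p j ≤ M * (j : ℝ) ^ (-(1 / α)))
    (m : ℕ) (hm : 1 ≤ m) :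
    (∃ C > 0, ∀ k : ℕ, 1 ≤ k →
        (∑' j : ℕ+, p j ^ m * (1 - p j) ^ k) ≤ C / (k : ℝ) ^ ((m : ℝ) - α)) ∧
    (((fun j : ℕ+ => p j) =o[atTop] fun j : ℕ+ => (j : ℝ) ^ (-(1 / α))) →
      (fun k : ℕ => ∑' j : ℕ+, p j ^ m * (1 - p j) ^ k)
        =o[atTop] fun k : ℕ => (k : ℝ) ^ (-((m : ℝ) - α))) :=
  missing_mass_moment_bound_general p hp0 hsum M α hM hα hbound m hm
end

section
/- There exists a constant c > 0 such that for every positive integer n and every (measurable) estimator f : ℕⁿ → ℝ, there exists a probability mass function p on ℕ = {1,2,3,...} with p_j ≠ 1 for all j (in fact p may be taken supported on {1,2}) such that E_p[ (f(X^{(1)},...,X^{(n)}) − H(p))² ] ≥ c / n, where X^{(1)},...,X^{(n)} are i.i.d. with distribution p and H(p) = −∑_j p_j log p_j is the Shannon entropy. -/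
open Filter Asymptotics

/-- `mcount x i` is the number of occurrences of the symbol `x i` in the sample `x`. -/
def mcount {n : ℕ} (x : Fin n → ℕ+) (i : Fin n) : ℕ :=
  (Finset.univ.filter fun k => x k = x i).card

/-- The harmonic entropy estimator. -/
noncomputable def Hhat {n : ℕ} (x : Fin n → ℕ+) : ℝ :=
  ((n : ℝ))⁻¹ * ∑ i, (J (n - 1) - J (mcount x i - 1))

/-- The probability that an i.i.d. sample of size `n` from the pmf `p` equals `x`. -/
noncomputable def Pn {n : ℕ} (p : ℕ+ → ℝ) (x : Fin n → ℕ+) : ℝ := ∏ i, p (x i)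

/-- The expectation of the harmonic entropy estimator over an i.i.d. sample of size `n`. -/
noncomputable def EHhat (p : ℕ+ → ℝ) (n : ℕ) : ℝ := ∑' x : Fin n → ℕ+, Pn p x * Hhat x

/-- The Shannon entropy of the pmf `p`. -/
noncomputable def Hent (p : ℕ+ → ℝ) : ℝ := -∑' j : ℕ+, p j * Real.log (p j)

/-!
Le Cam's two-point method. Take the pmfs `(1/4, 3/4)` and `(1/4 + δ, 3/4 - δ)` on `{1, 2}` with
`δ = 1 / (12 √n)`. By concavity of the binary entropy, whose slope on `[1/4, 1/3]` is at least
`log 2 > 1/2`, their entropies differ by at least `δ / 2`. The Hellinger affinity of the two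
product laws is `ρⁿ` with `ρ ≥ 1 - 2δ²`, hence `ρⁿ ≥ 1 - 2nδ² > 3/4`. Since
`√(PQ) ≤ P/4 + Q/4 + min P Q`, the overlap `∑ min (Pⁿ, Qⁿ)` is at least `1/4`, and on every
sample an estimator is at distance at least half the entropy gap from one of the two entropies.
So the two risks add up to at least `δ² / 32`, and one of them is at least `δ² / 64 = 1 / (9216 n)`.
-/

open Real
open scoped ENNReal

theorem ENNReal.tsum_fin_pi_prod {α : Type*} (g : α → ℝ≥0∞) (n : ℕ) :
    ∑' x : Fin n → α, ∏ i, g (x i) = (∑' a, g a) ^ n := by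
  induction n with
  | zero => simp
  | succ n ih =>
    rw [← (Fin.consEquiv fun _ => α).tsum_eq, ENNReal.tsum_prod', pow_succ', ← ih,
      ← ENNReal.tsum_mul_right]
    simp [Fin.prod_univ_succ, Fin.consEquiv, ENNReal.tsum_mul_left]

theorem ENNReal.le_or_le_of_add_le_add {a b c : ℝ≥0∞} (h : c + c ≤ a + b) : c ≤ a ∨ c ≤ b := by
  by_contra! hlt
  exact (ENNReal.add_lt_add hlt.1 hlt.2).not_ge h

theorem Real.sqrt_mul_le_add_min {a b : ℝ} (ha : 0 ≤ a) (hb : 0 ≤ b) :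
    √(a * b) ≤ a / 4 + b / 4 + min a b := by
  wlog hab : a ≤ b generalizing a b
  · simpa [mul_comm, min_comm, add_comm (a / 4)] using this hb ha (le_of_not_ge hab)
  rw [min_eq_left hab, sqrt_le_left (by positivity)]
  nlinarith [sq_nonneg (a - b / 4)]

theorem Real.mul_log_sub_le_binEntropy_sub {s t : ℝ} (hs : 0 ≤ s) (hst : s < t) (ht : t < 1) :
    (t - s) * (log (1 - t) - log t) ≤ binEntropy t - binEntropy s := by
  have hslope := strictConcave_binEntropy.concaveOn.le_slope_of_hasDerivAt
    ⟨hs, by linarith⟩ ⟨by linarith, ht.le⟩ hst (hasDerivAt_binEntropy (by linarith) ht.ne)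
  rw [slope_def_field, le_div_iff₀ (by linarith)] at hslope
  linarith

theorem Real.half_mul_sub_le_binEntropy_sub {s t : ℝ} (hs : 0 ≤ s) (hst : s < t)
    (ht : t ≤ 1 / 3) : (t - s) / 2 ≤ binEntropy t - binEntropy s := by
  have ht0 : 0 < t := by linarith
  have hlog : 1 / 2 < log (1 - t) - log t := by
    rw [← log_div (by linarith) ht0.ne']
    calc (1 : ℝ) / 2 < log 2 := by linarith [log_two_gt_d9]
      _ ≤ log ((1 - t) / t) := log_le_log two_pos (by rw [le_div_iff₀ ht0]; linarith)
  nlinarith [mul_log_sub_le_binEntropy_sub hs hst (by linarith)]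

section LeCam

variable {X : Type*} {P Q : X → ℝ}

noncomputable def hellingerAffinity (P Q : X → ℝ) : ℝ≥0∞ := ∑' x, ENNReal.ofReal √(P x * Q x)

theorem hellingerAffinity_le_add_tsum_min (hP : ∀ x, 0 ≤ P x) (hQ : ∀ x, 0 ≤ Q x) :
    hellingerAffinity P Q ≤
      4⁻¹ * ∑' x, ENNReal.ofReal (P x) + 4⁻¹ * ∑' x, ENNReal.ofReal (Q x) +
        ∑' x, min (ENNReal.ofReal (P x)) (ENNReal.ofReal (Q x)) := by
  rw [hellingerAffinity, ← ENNReal.tsum_mul_left, ← ENNReal.tsum_mul_left, ← ENNReal.tsum_add,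
    ← ENNReal.tsum_add]
  refine ENNReal.tsum_le_tsum fun x => ?_
  have hPx := hP x
  have hQx := hQ x
  calc ENNReal.ofReal √(P x * Q x)
      ≤ ENNReal.ofReal (P x / 4 + Q x / 4 + min (P x) (Q x)) :=
        ENNReal.ofReal_le_ofReal (sqrt_mul_le_add_min hPx hQx)
    _ = _ := by
      rw [ENNReal.ofReal_add (by positivity) (le_min hPx hQx),
        ENNReal.ofReal_add (by positivity) (by positivity), ENNReal.ofReal_min,
        div_eq_inv_mul, div_eq_inv_mul, ENNReal.ofReal_mul (by norm_num),
        ENNReal.ofReal_mul (by norm_num), ENNReal.ofReal_inv_of_pos (by norm_num)]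
      norm_num

theorem ofReal_mul_tsum_min_le (hP : ∀ x, 0 ≤ P x) (hQ : ∀ x, 0 ≤ Q x) (f : X → ℝ) (a b : ℝ) :
    ENNReal.ofReal ((b - a) ^ 2 / 2) * ∑' x, min (ENNReal.ofReal (P x)) (ENNReal.ofReal (Q x)) ≤
      ∑' x, ENNReal.ofReal (P x * (f x - a) ^ 2) + ∑' x, ENNReal.ofReal (Q x * (f x - b) ^ 2) := by
  rw [← ENNReal.tsum_mul_left, ← ENNReal.tsum_add]
  refine ENNReal.tsum_le_tsum fun x => ?_
  have hsep : (b - a) ^ 2 / 2 ≤ (f x - a) ^ 2 + (f x - b) ^ 2 := by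
    nlinarith [sq_nonneg (2 * f x - a - b)]
  rw [ENNReal.ofReal_mul (hP x), ENNReal.ofReal_mul (hQ x)]
  calc ENNReal.ofReal ((b - a) ^ 2 / 2) * min (ENNReal.ofReal (P x)) (ENNReal.ofReal (Q x))
      ≤ (ENNReal.ofReal ((f x - a) ^ 2) + ENNReal.ofReal ((f x - b) ^ 2)) *
          min (ENNReal.ofReal (P x)) (ENNReal.ofReal (Q x)) := by
        rw [← ENNReal.ofReal_add (sq_nonneg _) (sq_nonneg _)]
        gcongr
    _ ≤ _ := by
      rw [add_mul, mul_comm, mul_comm (ENNReal.ofReal ((f x - b) ^ 2))]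
      gcongr
      exacts [min_le_left _ _, min_le_right _ _]

end LeCam

noncomputable def risk {n : ℕ} (p : ℕ+ → ℝ) (f : (Fin n → ℕ+) → ℝ) : ℝ≥0∞ :=
  ∑' x, ENNReal.ofReal (Pn p x * (f x - Hent p) ^ 2)

section Sample

variable {n : ℕ} {p q : ℕ+ → ℝ}

theorem Pn_nonneg (hp : ∀ j, 0 ≤ p j) (x : Fin n → ℕ+) : 0 ≤ Pn p x :=
  Finset.prod_nonneg fun i _ => hp (x i)

theorem tsum_ofReal_Pn (hp : ∀ j, 0 ≤ p j) :
    ∑' x : Fin n → ℕ+, ENNReal.ofReal (Pn p x) = (∑' j, ENNReal.ofReal (p j)) ^ n := by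
  simp_rw [Pn, ENNReal.ofReal_prod_of_nonneg fun i _ => hp _]
  exact ENNReal.tsum_fin_pi_prod (fun j => ENNReal.ofReal (p j)) n

theorem hellingerAffinity_Pn (hp : ∀ j, 0 ≤ p j) (hq : ∀ j, 0 ≤ q j) :
    hellingerAffinity (Pn (n := n) p) (Pn q) = hellingerAffinity p q ^ n := by
  simp_rw [hellingerAffinity, Pn, ← Finset.prod_mul_distrib,
    sqrt_prod _ fun i _ => mul_nonneg (hp _) (hq _),
    ENNReal.ofReal_prod_of_nonneg fun i _ => sqrt_nonneg _]
  exact ENNReal.tsum_fin_pi_prod (fun j => ENNReal.ofReal √(p j * q j)) n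

theorem ofReal_mul_hellingerAffinity_pow_sub_le_risk_add_risk (hp : ∀ j, 0 ≤ p j)
    (hq : ∀ j, 0 ≤ q j)
    (hp1 : ∑' j, ENNReal.ofReal (p j) = 1) (hq1 : ∑' j, ENNReal.ofReal (q j) = 1)
    (f : (Fin n → ℕ+) → ℝ) :
    ENNReal.ofReal ((Hent q - Hent p) ^ 2 / 2) * (hellingerAffinity p q ^ n - 2⁻¹) ≤
      risk p f + risk q f := by
  refine le_trans ?_ (ofReal_mul_tsum_min_le (Pn_nonneg hp) (Pn_nonneg hq) f (Hent p) (Hent q))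
  gcongr
  rw [tsub_le_iff_left, ← hellingerAffinity_Pn hp hq]
  refine (hellingerAffinity_le_add_tsum_min (Pn_nonneg hp) (Pn_nonneg hq)).trans_eq ?_
  rw [tsum_ofReal_Pn hp, tsum_ofReal_Pn hq, hp1, hq1, one_pow, mul_one, ← two_mul,
    show (4 : ℝ≥0∞) = 2 * 2 by norm_num, ENNReal.mul_inv (by simp) (by simp), ← mul_assoc,
    ENNReal.mul_inv_cancel two_ne_zero ENNReal.ofNat_ne_top, one_mul]

end Sample

theorem tsum_pnat_eq_add_of_eq_zero {M : Type*} [AddCommMonoid M] [TopologicalSpace M]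
    {g : ℕ+ → M} (hg : ∀ j, j ≠ 1 → j ≠ 2 → g j = 0) : ∑' j, g j = g 1 + g 2 := by
  rw [tsum_eq_sum (s := {1, 2}) fun j hj => by simp_all, Finset.sum_pair (by decide)]

noncomputable def twoPoint (t : ℝ) (j : ℕ+) : ℝ := if j = 1 then t else if j = 2 then 1 - t else 0

section TwoPoint

variable {t : ℝ}

@[simp] theorem twoPoint_one (t : ℝ) : twoPoint t 1 = t := if_pos rfl

@[simp] theorem twoPoint_two (t : ℝ) : twoPoint t 2 = 1 - t := by simp [twoPoint]

theorem twoPoint_of_ne (t : ℝ) {j : ℕ+} (h1 : j ≠ 1) (h2 : j ≠ 2) : twoPoint t j = 0 := by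
  simp [twoPoint, h1, h2]

theorem twoPoint_eq_zero_of_two_lt (t : ℝ) {j : ℕ+} (hj : 2 < (j : ℕ)) : twoPoint t j = 0 :=
  twoPoint_of_ne t (by rintro rfl; simp at hj) (by rintro rfl; simp at hj)

theorem twoPoint_nonneg (ht0 : 0 ≤ t) (ht1 : t ≤ 1) (j : ℕ+) : 0 ≤ twoPoint t j := by
  unfold twoPoint
  split_ifs <;> linarith

theorem twoPoint_ne_one (ht0 : 0 < t) (ht1 : t < 1) (j : ℕ+) : twoPoint t j ≠ 1 := by
  unfold twoPoint
  split_ifs <;> intro h <;> linarith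

theorem tsum_twoPoint (t : ℝ) : ∑' j, twoPoint t j = 1 := by
  rw [tsum_pnat_eq_add_of_eq_zero fun j => twoPoint_of_ne t, twoPoint_one, twoPoint_two]
  ring

theorem tsum_ofReal_twoPoint (ht0 : 0 ≤ t) (ht1 : t ≤ 1) :
    ∑' j, ENNReal.ofReal (twoPoint t j) = 1 := by
  rw [tsum_pnat_eq_add_of_eq_zero fun j h1 h2 => by simp [twoPoint_of_ne t h1 h2], twoPoint_one,
    twoPoint_two, ← ENNReal.ofReal_add ht0 (by linarith), add_sub_cancel, ENNReal.ofReal_one]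

theorem Hent_twoPoint (t : ℝ) : Hent (twoPoint t) = binEntropy t := by
  rw [Hent, tsum_pnat_eq_add_of_eq_zero fun j h1 h2 => by simp [twoPoint_of_ne t h1 h2]]
  simp [binEntropy, log_inv]
  ring

theorem hellingerAffinity_twoPoint (s t : ℝ) :
    hellingerAffinity (twoPoint s) (twoPoint t) =
      ENNReal.ofReal (√(s * t) + √((1 - s) * (1 - t))) := by
  rw [hellingerAffinity,
    tsum_pnat_eq_add_of_eq_zero fun j h1 h2 => by simp [twoPoint_of_ne s h1 h2],
    ENNReal.ofReal_add (sqrt_nonneg _) (sqrt_nonneg _), twoPoint_one, twoPoint_one,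
    twoPoint_two, twoPoint_two]

end TwoPoint

theorem one_sub_two_mul_sq_le_sqrt_add_sqrt {δ : ℝ} (hδ0 : 0 ≤ δ) (hδ : δ ≤ 1 / 12) :
    1 - 2 * δ ^ 2 ≤ √(1 / 4 * (1 / 4 + δ)) + √((1 - 1 / 4) * (1 - (1 / 4 + δ))) := by
  have h1 : 1 / 4 + δ / 2 - δ ^ 2 ≤ √(1 / 4 * (1 / 4 + δ)) := by
    rw [le_sqrt (by nlinarith) (by nlinarith)]
    nlinarith [mul_nonneg (sq_nonneg δ) (show 0 ≤ 1 / 4 + δ - δ ^ 2 by nlinarith)]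
  have h2 : 3 / 4 - δ / 2 - δ ^ 2 ≤ √((1 - 1 / 4) * (1 - (1 / 4 + δ))) := by
    rw [le_sqrt (by nlinarith) (by nlinarith)]
    nlinarith [mul_nonneg (sq_nonneg δ) (show 0 ≤ 5 / 4 - δ - δ ^ 2 by nlinarith)]
  linarith

theorem risk_twoPoint_add_risk_twoPoint {n : ℕ} {δ : ℝ} (hδ0 : 0 < δ) (hδ : δ ≤ 1 / 12)
    (hnδ : n * δ ^ 2 ≤ 1 / 8) (f : (Fin n → ℕ+) → ℝ) :
    ENNReal.ofReal (δ ^ 2 / 64) + ENNReal.ofReal (δ ^ 2 / 64) ≤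
      risk (twoPoint (1 / 4)) f + risk (twoPoint (1 / 4 + δ)) f := by
  refine le_trans ?_ (ofReal_mul_hellingerAffinity_pow_sub_le_risk_add_risk
    (twoPoint_nonneg (by norm_num) (by norm_num)) (twoPoint_nonneg (by linarith) (by linarith))
    (tsum_ofReal_twoPoint (by norm_num) (by norm_num))
    (tsum_ofReal_twoPoint (by linarith) (by linarith)) f)
  have hgap : δ / 2 ≤ Hent (twoPoint (1 / 4 + δ)) - Hent (twoPoint (1 / 4)) := by
    simpa [Hent_twoPoint] using
      half_mul_sub_le_binEntropy_sub (s := 1 / 4) (t := 1 / 4 + δ) (by norm_num) (by linarith)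
        (by linarith)
  have hpow : 3 / 4 ≤ (√(1 / 4 * (1 / 4 + δ)) + √((1 - 1 / 4) * (1 - (1 / 4 + δ)))) ^ n :=
    calc (3 / 4 : ℝ) ≤ 1 + n * (-(2 * δ ^ 2)) := by nlinarith
      _ ≤ (1 + -(2 * δ ^ 2)) ^ n := one_add_mul_le_pow (by nlinarith) n
      _ ≤ _ := pow_le_pow_left₀ (by nlinarith)
        (by linarith [one_sub_two_mul_sq_le_sqrt_add_sqrt hδ0.le hδ]) n
  have hoverlap : ENNReal.ofReal (1 / 4) ≤
      hellingerAffinity (twoPoint (1 / 4)) (twoPoint (1 / 4 + δ)) ^ n - 2⁻¹ := by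
    rw [hellingerAffinity_twoPoint, ← ENNReal.ofReal_pow (by positivity), ← ENNReal.ofReal_ofNat 2,
      ← ENNReal.ofReal_inv_of_pos two_pos, ← ENNReal.ofReal_sub _ (by norm_num)]
    exact ENNReal.ofReal_le_ofReal (by linarith)
  rw [← ENNReal.ofReal_add (by positivity) (by positivity)]
  calc ENNReal.ofReal (δ ^ 2 / 64 + δ ^ 2 / 64)
      = ENNReal.ofReal ((δ / 2) ^ 2 / 2) * ENNReal.ofReal (1 / 4) := by
        rw [← ENNReal.ofReal_mul (by positivity)]
        ring_nf
    _ ≤ _ := by gcongr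

/-- minimax lower bound, two-point construction. There is `c > 0` such that
for every sample size `n ≥ 1` and every estimator `f : ℕⁿ → ℝ` there exists a pmf `p` on the
positive integers with `p_j ≠ 1` for all `j` (in fact supported on `{1,2}`) whose risk satisfies
`E_p[(f(X₁,…,Xₙ) − H(p))²] ≥ c/n`. -/
theorem entropy_minimax_lower_bound :
    ∃ c > 0, ∀ n : ℕ, 1 ≤ n → ∀ f : (Fin n → ℕ+) → ℝ,
      ∃ p : ℕ+ → ℝ, (∀ j, 0 ≤ p j) ∧ (∑' j, p j = 1) ∧ (∀ j, p j ≠ 1) ∧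
        (∀ j : ℕ+, 2 < (j : ℕ) → p j = 0) ∧
        ENNReal.ofReal (c / n) ≤
          ∑' x : Fin n → ℕ+, ENNReal.ofReal (Pn p x * (f x - Hent p) ^ 2) := by
  refine ⟨1 / 9216, by norm_num, fun n hn f => ?_⟩
  have hn1 : (1 : ℝ) ≤ n := by exact_mod_cast hn
  set δ : ℝ := 1 / (12 * √n)
  have hδ0 : 0 < δ := by positivity
  have hδ : δ ≤ 1 / 12 := one_div_le_one_div_of_le (by norm_num) (by nlinarith [one_le_sqrt.2 hn1])
  have hδsq : δ ^ 2 = 1 / (144 * n) := by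
    rw [div_pow, mul_pow, sq_sqrt (by positivity)]
    norm_num
  have hnδ : n * δ ^ 2 ≤ 1 / 8 := by
    rw [hδsq, mul_one_div, div_le_iff₀ (by positivity)]
    nlinarith
  have hc : 1 / 9216 / (n : ℝ) = δ ^ 2 / 64 := by
    rw [hδsq]
    field_simp
    norm_num
  rw [hc]
  obtain h | h := ENNReal.le_or_le_of_add_le_add (risk_twoPoint_add_risk_twoPoint hδ0 hδ hnδ f)
  · exact ⟨twoPoint (1 / 4), twoPoint_nonneg (by norm_num) (by norm_num), tsum_twoPoint _,
      twoPoint_ne_one (by norm_num) (by norm_num), fun j => twoPoint_eq_zero_of_two_lt _, h⟩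
  · exact ⟨twoPoint (1 / 4 + δ), twoPoint_nonneg (by linarith) (by linarith), tsum_twoPoint _,
      twoPoint_ne_one (by linarith) (by linarith), fun j => twoPoint_eq_zero_of_two_lt _, h⟩
end
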